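/- arXiv:1905.04801 — 8 statements merged into one kernel-verified Lean document; each statement's English description precedes it below -/
import Mathlib

section
/- Let X be a complex Banach space, U a bounded invertible operator on X, A a bounded operator on X, and γ ∈ ℂ with |γ| = 1 such that U A U⁻¹ = γ A. Let w be a bounded operator on X commuting with A, and set T = w U. Assume A has a left inverse, i.e. there exists a bounded operator S on X with S A = I. Then for every λ in the approximate point spectrum of T and every n ∈ ℕ, the number γⁿ λ also lies in the approximate point spectrum of T. -/
open Filter Topology

/-- The approximate point spectrum of a bounded operator `T` on a complex Banach space:
the set of `l : ℂ` for which there is a sequence of unit vectors `xₙ` with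
`‖T xₙ - l • xₙ‖ → 0`. -/
def approxPointSpectrum {X : Type*} [NormedAddCommGroup X] [NormedSpace ℂ X]
    (T : X →L[ℂ] X) : Set ℂ :=
  {l : ℂ | ∃ x : ℕ → X, (∀ n, ‖x n‖ = 1) ∧
    Tendsto (fun n => ‖T (x n) - l • x n‖) atTop (nhds 0)}

theorem statement_0 {X : Type*} [NormedAddCommGroup X] [NormedSpace ℂ X] [CompleteSpace X]
    (U V A w S T : X →L[ℂ] X) (γ : ℂ)
    (hUV : U * V = 1) (hVU : V * U = 1) (hγ : ‖γ‖ = 1)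
    (hA : U * A * V = γ • A)
    (hwA : w * A = A * w)
    (hT : T = w * U)
    (hS : S * A = 1) :
    ∀ l ∈ approxPointSpectrum T, ∀ n : ℕ, γ ^ n * l ∈ approxPointSpectrum T := by
  have hUA : U * A = γ • (A * U) := by
    have h := congrArg (· * U) hA
    simp only [smul_mul_assoc, mul_assoc, hVU, mul_one] at h
    exact h
  have hTA : T * A = γ • (A * T) := by
    subst hT
    calc w * U * A = w * (U * A) := by rw [mul_assoc]
      _ = γ • (w * A * U) := by rw [hUA, mul_smul_comm, mul_assoc]
      _ = γ • (A * (w * U)) := by rw [hwA, mul_assoc]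
  have step : ∀ l, l ∈ approxPointSpectrum T → γ * l ∈ approxPointSpectrum T := by
    rintro l ⟨x, hx1, hx2⟩
    have hSx : ∀ n, x n = S (A (x n)) := by
      intro n
      have := congrArg (fun f : X →L[ℂ] X => f (x n)) hS
      simpa using this.symm
    have hAx : ∀ n, ‖A (x n)‖ ≠ 0 := by
      intro n h
      rw [norm_eq_zero] at h
      have h1 : ‖x n‖ = 0 := by rw [hSx n, h, map_zero, norm_zero]
      rw [hx1 n] at h1; norm_num at h1
    have hAxS : ∀ n, ‖A (x n)‖⁻¹ ≤ ‖S‖ := by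
      intro n
      have h1 : (1:ℝ) ≤ ‖S‖ * ‖A (x n)‖ := by
        calc (1:ℝ) = ‖x n‖ := (hx1 n).symm
          _ = ‖S (A (x n))‖ := by rw [← hSx n]
          _ ≤ ‖S‖ * ‖A (x n)‖ := S.le_opNorm _
      rw [inv_le_iff_one_le_mul₀' (lt_of_le_of_ne (norm_nonneg _) (Ne.symm (hAx n)))]
      linarith
    refine ⟨fun n => (‖A (x n)‖⁻¹ : ℝ) • A (x n), fun n => ?_, ?_⟩
    · rw [norm_smul, norm_inv, norm_norm, inv_mul_cancel₀ (hAx n)]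
    · have key : ∀ n, ‖T ((‖A (x n)‖⁻¹ : ℝ) • A (x n)) - (γ * l) • (‖A (x n)‖⁻¹ : ℝ) • A (x n)‖
          ≤ ‖S‖ * ‖A‖ * ‖T (x n) - l • x n‖ := by
        intro n
        have hTAx : T (A (x n)) = γ • A (T (x n)) := by
          have := congrArg (fun f : X →L[ℂ] X => f (x n)) hTA
          simpa using this
        have heq : T ((‖A (x n)‖⁻¹ : ℝ) • A (x n)) - (γ * l) • (‖A (x n)‖⁻¹ : ℝ) • A (x n)
            = (‖A (x n)‖⁻¹ : ℝ) • (γ • A (T (x n) - l • x n)) := by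
          rw [T.map_smul_of_tower, hTAx, map_sub, map_smul, smul_sub, smul_sub]
          congr 1
          rw [mul_smul, smul_comm l ((‖A (x n)‖⁻¹ : ℝ)),
            smul_comm γ ((‖A (x n)‖⁻¹ : ℝ))]
        rw [heq, norm_smul, norm_smul, hγ, one_mul, norm_inv, norm_norm]
        calc ‖A (x n)‖⁻¹ * ‖A (T (x n) - l • x n)‖
            ≤ ‖S‖ * (‖A‖ * ‖T (x n) - l • x n‖) := by
              apply mul_le_mul (hAxS n) (A.le_opNorm _) (norm_nonneg _)
                (norm_nonneg _)
          _ = ‖S‖ * ‖A‖ * ‖T (x n) - l • x n‖ := by ring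
      have hlim : Tendsto (fun n => ‖S‖ * ‖A‖ * ‖T (x n) - l • x n‖) atTop (nhds 0) := by
        simpa using hx2.const_mul (‖S‖ * ‖A‖)
      exact squeeze_zero (fun n => norm_nonneg _) key hlim
  intro l hl n
  induction n with
  | zero => simpa using hl
  | succ k ih =>
    have : γ ^ (k + 1) * l = γ * (γ ^ k * l) := by ring
    rw [this]
    exact step _ ih
end

section
/- Let X be a complex Banach space, U a bounded invertible operator on X, A a bounded operator on X, and γ ∈ ℂ with |γ| = 1 such that U A U⁻¹ = γ A. Let w be a bounded operator on X commuting with A, set T = w U, and assume A has a left inverse S ∈ L(X) with S A = I. If λ ∈ σ₂(T), i.e. there exists a singular sequence (xₙ) of unit vectors in X with ‖T xₙ − λ xₙ‖ → 0, then γⁿ λ ∈ σ₂(T) for every n ∈ ℕ. -/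
open Filter Topology

/-- A sequence in a normed space is singular if it has no norm-convergent subsequence. -/
def IsSingularSeq {X : Type*} [NormedAddCommGroup X] (x : ℕ → X) : Prop :=
  ¬ ∃ (y : X) (φ : ℕ → ℕ), StrictMono φ ∧ Tendsto (fun n => x (φ n)) atTop (nhds y)

/-- `σ₂(T)`: the set of `l : ℂ` for which there is a singular sequence of unit vectors `xₙ`
with `‖T xₙ - l • xₙ‖ → 0`. -/
def sigma2 {X : Type*} [NormedAddCommGroup X] [NormedSpace ℂ X]
    (T : X →L[ℂ] X) : Set ℂ :=
  {l : ℂ | ∃ x : ℕ → X, (∀ n, ‖x n‖ = 1) ∧ IsSingularSeq x ∧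
    Tendsto (fun n => ‖T (x n) - l • x n‖) atTop (nhds 0)}

lemma sigma2_step {X : Type*} [NormedAddCommGroup X] [NormedSpace ℂ X]
    (A S T : X →L[ℂ] X) (γ : ℂ) (hγ : ‖γ‖ = 1)
    (hTA : T * A = γ • (A * T)) (hS : S * A = 1) :
    ∀ l ∈ sigma2 T, γ * l ∈ sigma2 T := by
  rintro l ⟨x, hx1, hxs, hxl⟩
  have hSA : ∀ v : X, S (A v) = v := by
    intro v
    have := congrArg (fun f : X →L[ℂ] X => f v) hS
    simpa using this
  have hSnorm : ∀ v : X, ‖v‖ ≤ ‖S‖ * ‖A v‖ := by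
    intro v
    calc ‖v‖ = ‖S (A v)‖ := by rw [hSA v]
    _ ≤ ‖S‖ * ‖A v‖ := S.le_opNorm _
  have hSpos : 0 < ‖S‖ := by
    by_contra h
    push_neg at h
    have h1 := hSnorm (x 0)
    rw [hx1 0] at h1
    nlinarith [norm_nonneg (A (x 0))]
  have hlow : ∀ n, (‖S‖)⁻¹ ≤ ‖A (x n)‖ := by
    intro n
    have h1 := hSnorm (x n)
    rw [hx1 n] at h1
    rw [inv_le_iff_one_le_mul₀ hSpos]
    linarith
  have hApos : ∀ n, 0 < ‖A (x n)‖ := fun n =>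
    lt_of_lt_of_le (inv_pos.mpr hSpos) (hlow n)
  set y : ℕ → X := fun n => (‖A (x n)‖ : ℂ)⁻¹ • A (x n) with hy
  have hy1 : ∀ n, ‖y n‖ = 1 := by
    intro n
    rw [hy]
    simp only [norm_smul, norm_inv, Complex.norm_real, Real.norm_eq_abs,
      abs_of_pos (hApos n)]
    rw [inv_mul_cancel₀ (hApos n).ne']
  have hTAv : ∀ v : X, T (A v) = γ • A (T v) := by
    intro v
    have := congrArg (fun f : X →L[ℂ] X => f v) hTA
    simpa using this
  -- convergence
  have hconv : Tendsto (fun n => ‖T (y n) - (γ * l) • y n‖) atTop (nhds 0) := by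
    have hbound : ∀ n, ‖T (y n) - (γ * l) • y n‖ ≤ ‖S‖ * ‖A‖ * ‖T (x n) - l • x n‖ := by
      intro n
      have key : T (y n) - (γ * l) • y n
          = (‖A (x n)‖ : ℂ)⁻¹ • (γ • (A (T (x n) - l • x n))) := by
        rw [hy]
        simp only [map_smul, hTAv, map_sub, smul_sub, mul_smul]
        simp only [smul_smul]
        ring_nf
      rw [key]
      rw [norm_smul, norm_smul, hγ, one_mul, norm_inv, Complex.norm_real,
        Real.norm_eq_abs, abs_of_pos (hApos n)]
      have h1 : ‖A (T (x n) - l • x n)‖ ≤ ‖A‖ * ‖T (x n) - l • x n‖ := A.le_opNorm _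
      have h2 : (‖A (x n)‖)⁻¹ ≤ ‖S‖ := by
        rw [inv_le_comm₀ (hApos n) hSpos]
        exact hlow n
      calc (‖A (x n)‖)⁻¹ * ‖A (T (x n) - l • x n)‖
          ≤ ‖S‖ * (‖A‖ * ‖T (x n) - l • x n‖) := by
            apply mul_le_mul h2 h1 (norm_nonneg _) (le_of_lt hSpos)
        _ = ‖S‖ * ‖A‖ * ‖T (x n) - l • x n‖ := by ring
    apply squeeze_zero (fun n => norm_nonneg _) hbound
    simpa using hxl.const_mul (‖S‖ * ‖A‖)
  -- singularity
  refine ⟨y, hy1, ?_, hconv⟩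
  rintro ⟨z, φ, hφ, hz⟩
  -- norms ‖A (x (φ n))‖ are in a compact interval
  have hmem : ∀ n, ‖A (x (φ n))‖ ∈ Set.Icc (‖S‖)⁻¹ ‖A‖ := by
    intro n
    refine ⟨hlow _, ?_⟩
    have := A.le_opNorm (x (φ n))
    rwa [hx1, mul_one] at this
  obtain ⟨c, hc, ψ, hψ, hcψ⟩ := (isCompact_Icc (a := (‖S‖)⁻¹) (b := ‖A‖)).tendsto_subseq hmem
  have hAx : ∀ n, A (x n) = (‖A (x n)‖ : ℂ) • y n := by
    intro n
    rw [hy]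
    rw [smul_smul]
    rw [mul_inv_cancel₀ (by exact_mod_cast (hApos n).ne')]
    simp
  have hAconv : Tendsto (fun n => A (x (φ (ψ n)))) atTop (nhds ((c : ℂ) • z)) := by
    have h1 : Tendsto (fun n => ((‖A (x (φ (ψ n)))‖ : ℝ) : ℂ)) atTop (nhds (c : ℂ)) :=
      (Complex.continuous_ofReal.tendsto c).comp hcψ
    have h2 : Tendsto (fun n => y (φ (ψ n))) atTop (nhds z) := hz.comp hψ.tendsto_atTop
    have := h1.smul h2
    apply this.congr
    intro n
    rw [← hAx]
  have hxconv : Tendsto (fun n => x (φ (ψ n))) atTop (nhds (S ((c : ℂ) • z))) := by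
    have := (S.continuous.tendsto _).comp hAconv
    apply this.congr
    intro n
    simp [hSA]
  exact hxs ⟨S ((c : ℂ) • z), φ ∘ ψ, hφ.comp hψ, hxconv⟩

theorem statement_1 {X : Type*} [NormedAddCommGroup X] [NormedSpace ℂ X] [CompleteSpace X]
    (U V A w S T : X →L[ℂ] X) (γ : ℂ)
    (hUV : U * V = 1) (hVU : V * U = 1) (hγ : ‖γ‖ = 1)
    (hA : U * A * V = γ • A)
    (hwA : w * A = A * w)
    (hT : T = w * U)
    (hS : S * A = 1) :
    ∀ l ∈ sigma2 T, ∀ n : ℕ, γ ^ n * l ∈ sigma2 T := by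
  have hUA : U * A = γ • (A * U) := by
    calc U * A = U * A * (V * U) := by rw [hVU, mul_one]
    _ = (U * A * V) * U := by rw [← mul_assoc]
    _ = (γ • A) * U := by rw [hA]
    _ = γ • (A * U) := smul_mul_assoc γ A U
  have hTA : T * A = γ • (A * T) := by
    calc T * A = w * (U * A) := by rw [hT, mul_assoc]
    _ = w * (γ • (A * U)) := by rw [hUA]
    _ = γ • (w * (A * U)) := (mul_smul_comm γ w (A * U))
    _ = γ • ((w * A) * U) := by rw [mul_assoc]
    _ = γ • ((A * w) * U) := by rw [hwA]
    _ = γ • (A * T) := by rw [hT, mul_assoc]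
  intro l hl n
  induction n with
  | zero => simpa using hl
  | succ n ih =>
    have := sigma2_step A S T γ hγ hTA hS _ ih
    have h : γ ^ (n + 1) * l = γ * (γ ^ n * l) := by ring
    rw [h]
    exact this
end

section
/- Let X be a complex Banach space, U a bounded invertible operator on X, A a bounded invertible operator on X, and γ ∈ ℂ with |γ| = 1 which is not a root of unity, such that U A U⁻¹ = γ A. Let w be a bounded operator on X commuting with A and set T = w U. Then the spectrum σ(T), the semi-Fredholm spectrum σ₁(T), and the Fredholm spectrum σ₃(T) are rotation invariant subsets of ℂ: if λ belongs to one of these sets and μ ∈ ℂ with |μ| = 1, then μλ belongs to the same set. -/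
open Filter Topology

/-- A bounded operator is semi-Fredholm if its range is closed and either its kernel is
finite dimensional or its range has finite codimension. -/
def IsSemiFredholm {X : Type*} [NormedAddCommGroup X] [NormedSpace ℂ X]
    (S : X →L[ℂ] X) : Prop :=
  IsClosed (LinearMap.range (S : X →ₗ[ℂ] X) : Set X) ∧
    (FiniteDimensional ℂ (LinearMap.ker (S : X →ₗ[ℂ] X)) ∨ FiniteDimensional ℂ (X ⧸ LinearMap.range (S : X →ₗ[ℂ] X)))

/-- A bounded operator is Fredholm if its range is closed, its kernel is finite dimensional,
and its range has finite codimension. -/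
def IsFredholmOp {X : Type*} [NormedAddCommGroup X] [NormedSpace ℂ X]
    (S : X →L[ℂ] X) : Prop :=
  IsClosed (LinearMap.range (S : X →ₗ[ℂ] X) : Set X) ∧
    FiniteDimensional ℂ (LinearMap.ker (S : X →ₗ[ℂ] X)) ∧ FiniteDimensional ℂ (X ⧸ LinearMap.range (S : X →ₗ[ℂ] X))

/-- The semi-Fredholm spectrum `σ₁(T)`. -/
def sigma1 {X : Type*} [NormedAddCommGroup X] [NormedSpace ℂ X]
    (T : X →L[ℂ] X) : Set ℂ :=
  {l : ℂ | ¬ IsSemiFredholm (l • (1 : X →L[ℂ] X) - T)}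

/-- The Fredholm spectrum `σ₃(T)`. -/
def sigma3 {X : Type*} [NormedAddCommGroup X] [NormedSpace ℂ X]
    (T : X →L[ℂ] X) : Set ℂ :=
  {l : ℂ | ¬ IsFredholmOp (l • (1 : X →L[ℂ] X) - T)}

/-- A subset of `ℂ` is rotation invariant if it is stable under multiplication by
unimodular numbers. -/
def RotationInvariant (s : Set ℂ) : Prop :=
  ∀ l ∈ s, ∀ μ : ℂ, ‖μ‖ = 1 → μ * l ∈ s

/-!
From `U A U⁻¹ = γ A` and `w A = A w` one gets `A⁻¹ T A = γ T`, so that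
`λ - T = γ⁻¹ A⁻¹ (γλ - T) A`. Each of the three sets is `{λ | λ - T ∉ 𝒪}` for an open set `𝒪` of
operators stable under multiplication by invertible operators on either side (the invertible,
semi-Fredholm and Fredholm operators), hence it is closed and stable under `λ ↦ γλ`. As `γ` is not
a root of unity, its powers are dense in the unit circle, and rotation invariance follows.

Openness is the classical perturbation theorem. If `S` has closed range and finite-dimensional
kernel, it is bounded below on a closed complement of its kernel, and so is every nearby operator.
If `S` has closed range of finite codimension, `S` plus the inclusion of a finite-dimensional
complement of its range is surjective, surjectivity is an open condition by the open mapping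
theorem, and a range of finite codimension is automatically closed.
-/

open Function

namespace ContinuousLinearMap

variable {𝕜 : Type*} [NontriviallyNormedField 𝕜] {E F : Type*}
  [NormedAddCommGroup E] [NormedSpace 𝕜 E] [NormedAddCommGroup F] [NormedSpace 𝕜 F]

theorem surjective_coprod_subtypeL_iff (S : E →L[𝕜] F) (C : Submodule 𝕜 F) :
    Surjective (S.coprod C.subtypeL) ↔ Codisjoint (LinearMap.range (S : E →ₗ[𝕜] F)) C := by
  rw [codisjoint_iff, ← coe_coe, ← LinearMap.range_eq_top, coe_coprod, LinearMap.range_coprod]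
  simp

theorem _root_.AntilipschitzWith.eventually_antilipschitz_nhds {f : E →L[𝕜] F} {K : NNReal}
    (hf : AntilipschitzWith K f) : ∀ᶠ g : E →L[𝕜] F in 𝓝 f, ∃ K', AntilipschitzWith K' g := by
  have hf' : AntilipschitzWith (K + 1) f := fun x y => (hf x y).trans (by gcongr; simp)
  filter_upwards [Metric.ball_mem_nhds f (by positivity : (0 : ℝ) < ((K + 1)⁻¹ : NNReal))]
    with g hg
  have hlt : ‖g - f‖₊ < (K + 1)⁻¹ := by
    rw [Metric.mem_ball, dist_eq_norm] at hg
    exact_mod_cast hg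
  exact ⟨_, by simpa using hf'.add_lipschitzWith (g - f).lipschitz hlt⟩

variable [CompleteSpace E] [CompleteSpace F]

theorem eventually_surjective {Φ : E →L[𝕜] F} (hΦ : Surjective Φ) :
    ∀ᶠ Φ' : E →L[𝕜] F in 𝓝 Φ, Surjective Φ' := by
  obtain ⟨Φsymm, hpos⟩ :=
    Φ.exists_nonlinearRightInverse_of_surjective (LinearMap.range_eq_top.2 hΦ)
  filter_upwards [Metric.ball_mem_nhds Φ (by positivity : (0 : ℝ) < (Φsymm.nnnorm : ℝ)⁻¹)]
    with Φ' hΦ'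
  have hlt : ‖Φ' - Φ‖₊ < Φsymm.nnnorm⁻¹ := by
    rw [Metric.mem_ball, dist_eq_norm] at hΦ'
    exact_mod_cast hΦ'
  have happrox : ApproximatesLinearOn Φ' Φ Set.univ ‖Φ' - Φ‖₊ := fun x _ y _ => by
    simpa [map_sub, sub_sub_sub_comm] using (Φ' - Φ).le_opNorm (x - y)
  have hopen : IsOpen (Set.range Φ') := by
    simpa using happrox.open_image Φsymm isOpen_univ (.inr hlt)
  have htop : LinearMap.range (Φ' : E →ₗ[𝕜] F) = ⊤ :=
    Submodule.eq_top_of_nonempty_interior' _ ⟨0, by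
      rw [LinearMap.coe_range, coe_coe, hopen.interior_eq]; exact ⟨0, map_zero Φ'⟩⟩
  exact LinearMap.range_eq_top.1 htop

variable [CompleteSpace 𝕜]

/-- Kato's lemma: a range of finite codimension is closed. -/
theorem isClosed_range_of_codisjoint (S : E →L[𝕜] F) {C : Submodule 𝕜 F}
    [FiniteDimensional 𝕜 C] (hC : Codisjoint (LinearMap.range (S : E →ₗ[𝕜] F)) C) :
    IsClosed (LinearMap.range (S : E →ₗ[𝕜] F) : Set F) := by
  have : CompleteSpace C := FiniteDimensional.complete 𝕜 C
  set Φ : E × C →L[𝕜] F := S.coprod C.subtypeL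
  have hpre : Φ ⁻¹' (LinearMap.range (S : E →ₗ[𝕜] F) : Set F) =
      Prod.snd ⁻¹' ((LinearMap.range (S : E →ₗ[𝕜] F)).comap C.subtype : Set C) := by
    ext ⟨x, c⟩
    exact Submodule.add_mem_iff_right _ (LinearMap.mem_range_self _ x)
  have hΦ := (Φ.isQuotientMap ((surjective_coprod_subtypeL_iff S C).2 hC)).isCoinducing
  rw [← hΦ.isClosed_preimage, hpre]
  exact (Submodule.closed_of_finiteDimensional _).preimage continuous_snd

end ContinuousLinearMap

section SemiFredholm

variable {𝕜 : Type*} [NontriviallyNormedField 𝕜] {D E F G : Type*}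
  [NormedAddCommGroup D] [NormedSpace 𝕜 D] [NormedAddCommGroup E] [NormedSpace 𝕜 E]
  [NormedAddCommGroup F] [NormedSpace 𝕜 F] [NormedAddCommGroup G] [NormedSpace 𝕜 G]

def IsUpperSemiFredholm (S : E →L[𝕜] F) : Prop :=
  IsClosed (LinearMap.range (S : E →ₗ[𝕜] F) : Set F) ∧
    FiniteDimensional 𝕜 (LinearMap.ker (S : E →ₗ[𝕜] F))

def IsLowerSemiFredholm (S : E →L[𝕜] F) : Prop :=
  IsClosed (LinearMap.range (S : E →ₗ[𝕜] F) : Set F) ∧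
    FiniteDimensional 𝕜 (F ⧸ LinearMap.range (S : E →ₗ[𝕜] F))

theorem range_equiv_comp_comp_equiv (S : E →L[𝕜] F) (e : F ≃L[𝕜] G) (f : D ≃L[𝕜] E) :
    LinearMap.range (((e : F →L[𝕜] G) ∘L S ∘L (f : D →L[𝕜] E)) : D →ₗ[𝕜] G) =
      (LinearMap.range (S : E →ₗ[𝕜] F)).map (e : F →ₗ[𝕜] G) := by
  simp [LinearMap.range_comp]

theorem ker_equiv_comp_comp_equiv (S : E →L[𝕜] F) (e : F ≃L[𝕜] G) (f : D ≃L[𝕜] E) :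
    LinearMap.ker (((e : F →L[𝕜] G) ∘L S ∘L (f : D →L[𝕜] E)) : D →ₗ[𝕜] G) =
      (LinearMap.ker (S : E →ₗ[𝕜] F)).comap (f : D →ₗ[𝕜] E) := by
  simp [LinearMap.ker_comp]

theorem range_comp_subtypeL (S : E →L[𝕜] F) (M : Submodule 𝕜 E) :
    LinearMap.range ((S ∘L M.subtypeL : M →L[𝕜] F) : M →ₗ[𝕜] F) = M.map (S : E →ₗ[𝕜] F) := by
  simp [LinearMap.range_comp]

theorem isClosed_range_equiv_comp_comp_equiv {S : E →L[𝕜] F}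
    (hS : IsClosed (LinearMap.range (S : E →ₗ[𝕜] F) : Set F)) (e : F ≃L[𝕜] G) (f : D ≃L[𝕜] E) :
    IsClosed (LinearMap.range (((e : F →L[𝕜] G) ∘L S ∘L (f : D →L[𝕜] E)) : D →ₗ[𝕜] G) : Set G) := by
  rw [range_equiv_comp_comp_equiv, Submodule.map_coe]
  exact e.toHomeomorph.isClosedMap _ hS

theorem IsUpperSemiFredholm.equiv_comp_comp_equiv {S : E →L[𝕜] F} (hS : IsUpperSemiFredholm S)
    (e : F ≃L[𝕜] G) (f : D ≃L[𝕜] E) :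
    IsUpperSemiFredholm ((e : F →L[𝕜] G) ∘L S ∘L (f : D →L[𝕜] E)) := by
  refine ⟨isClosed_range_equiv_comp_comp_equiv hS.1 e f, ?_⟩
  have := hS.2
  rw [ker_equiv_comp_comp_equiv, Submodule.comap_equiv_eq_map_symm]
  infer_instance

theorem IsLowerSemiFredholm.equiv_comp_comp_equiv {S : E →L[𝕜] F} (hS : IsLowerSemiFredholm S)
    (e : F ≃L[𝕜] G) (f : D ≃L[𝕜] E) :
    IsLowerSemiFredholm ((e : F →L[𝕜] G) ∘L S ∘L (f : D →L[𝕜] E)) := by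
  refine ⟨isClosed_range_equiv_comp_comp_equiv hS.1 e f, ?_⟩
  have := hS.2
  rw [range_equiv_comp_comp_equiv]
  exact Module.Finite.equiv (Submodule.Quotient.equiv _ _ e.toLinearEquiv rfl)

variable [CompleteSpace 𝕜]

theorem IsUpperSemiFredholm.of_antilipschitz {S : E →L[𝕜] F} {M : Submodule 𝕜 E} [M.CoFG]
    [CompleteSpace M] {K : NNReal} (hK : AntilipschitzWith K (S ∘L M.subtypeL)) :
    IsUpperSemiFredholm S := by
  constructor
  · apply LinearMap.isClosed_range_of_isClosed_map_of_finiteDimensional_quotient (s := M)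
    rw [← range_comp_subtypeL, LinearMap.coe_range, ContinuousLinearMap.coe_coe]
    exact hK.isClosed_range (S ∘L M.subtypeL).uniformContinuous
  · have hdisj : Disjoint (LinearMap.ker (S : E →ₗ[𝕜] F)) M := by
      rw [Submodule.disjoint_def]
      intro x hx hxM
      have := hK.injective (a₁ := ⟨x, hxM⟩) (a₂ := 0) (by simpa using hx)
      simpa using congrArg Subtype.val this
    exact Module.Finite.iff_fg.2 (Submodule.CoFG.fg_of_disjoint hdisj inferInstance)

variable [CompleteSpace E] [CompleteSpace F]

theorem IsLowerSemiFredholm.eventually {S : E →L[𝕜] F} (hS : IsLowerSemiFredholm S) :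
    ∀ᶠ S' : E →L[𝕜] F in 𝓝 S, IsLowerSemiFredholm S' := by
  obtain ⟨C, hC⟩ := Submodule.exists_isCompl (LinearMap.range (S : E →ₗ[𝕜] F))
  have : FiniteDimensional 𝕜 C := Module.Finite.iff_fg.2 (Submodule.CoFG.fg_of_isCompl hC hS.2)
  have : CompleteSpace C := FiniteDimensional.complete 𝕜 C
  have hcont : Continuous fun S' : E →L[𝕜] F => S'.coprod C.subtypeL :=
    (ContinuousLinearMap.coprodEquivL 𝕜).continuous.comp (continuous_id.prodMk continuous_const)
  filter_upwards [hcont.continuousAt.eventually (ContinuousLinearMap.eventually_surjective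
    ((S.surjective_coprod_subtypeL_iff C).2 hC.codisjoint))] with S' hS'
  have hcod := (S'.surjective_coprod_subtypeL_iff C).1 hS'
  exact ⟨S'.isClosed_range_of_codisjoint hcod,
    Submodule.FG.cofg_of_codisjoint hcod.symm (Module.Finite.iff_fg.1 inferInstance)⟩

theorem isOpen_setOf_isLowerSemiFredholm : IsOpen {S : E →L[𝕜] F | IsLowerSemiFredholm S} :=
  isOpen_iff_mem_nhds.2 fun _ hS => hS.eventually

end SemiFredholm

section UpperSemiFredholm

variable {𝕜 : Type*} [RCLike 𝕜] {E F : Type*}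
  [NormedAddCommGroup E] [NormedSpace 𝕜 E] [CompleteSpace E]
  [NormedAddCommGroup F] [NormedSpace 𝕜 F] [CompleteSpace F]

theorem IsUpperSemiFredholm.exists_antilipschitz {S : E →L[𝕜] F} (hS : IsUpperSemiFredholm S) :
    ∃ M : Submodule 𝕜 E, M.CoFG ∧ IsClosed (M : Set E) ∧
      ∃ K, AntilipschitzWith K (S ∘L M.subtypeL) := by
  obtain ⟨hclosed, hker⟩ := hS
  obtain ⟨M, hMc, hcompl⟩ :=
    (Submodule.ClosedComplemented.of_finiteDimensional
      (LinearMap.ker (S : E →ₗ[𝕜] F))).exists_isClosed_isCompl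
  have : CompleteSpace M := hMc.completeSpace_coe
  refine ⟨M, Submodule.FG.cofg_of_isCompl hcompl (Module.Finite.iff_fg.1 hker), hMc,
    (S ∘L M.subtypeL).antilipschitz_of_injective_of_isClosed_range ?_ ?_⟩
  · rw [injective_iff_map_eq_zero]
    intro x hx
    have hx' : (x : E) ∈ LinearMap.ker (S : E →ₗ[𝕜] F) ⊓ M := ⟨hx, x.2⟩
    rw [hcompl.inf_eq_bot, Submodule.mem_bot] at hx'
    exact Subtype.ext hx'
  · have hmap : M.map (S : E →ₗ[𝕜] F) = LinearMap.range (S : E →ₗ[𝕜] F) :=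
      Submodule.map_eq_range_iff.2 hcompl.codisjoint.symm
    rwa [← ContinuousLinearMap.coe_coe, ← LinearMap.coe_range, range_comp_subtypeL, hmap]

theorem IsUpperSemiFredholm.eventually {S : E →L[𝕜] F} (hS : IsUpperSemiFredholm S) :
    ∀ᶠ S' : E →L[𝕜] F in 𝓝 S, IsUpperSemiFredholm S' := by
  obtain ⟨M, hM, hMc, K, hK⟩ := hS.exists_antilipschitz
  have : CompleteSpace M := hMc.completeSpace_coe
  have hcont : Continuous fun S' : E →L[𝕜] F => S' ∘L M.subtypeL :=
    (M.subtypeL.precomp F).continuous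
  filter_upwards [hcont.continuousAt.eventually hK.eventually_antilipschitz_nhds]
    with S' ⟨K', hK'⟩
  exact .of_antilipschitz hK'

theorem isOpen_setOf_isUpperSemiFredholm : IsOpen {S : E →L[𝕜] F | IsUpperSemiFredholm S} :=
  isOpen_iff_mem_nhds.2 fun _ hS => hS.eventually

end UpperSemiFredholm

section Operators

variable {X : Type*} [NormedAddCommGroup X] [NormedSpace ℂ X]

theorem isSemiFredholm_iff (S : X →L[ℂ] X) :
    IsSemiFredholm S ↔ IsUpperSemiFredholm S ∨ IsLowerSemiFredholm S :=
  and_or_left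

theorem isFredholmOp_iff (S : X →L[ℂ] X) :
    IsFredholmOp S ↔ IsUpperSemiFredholm S ∧ IsLowerSemiFredholm S :=
  ⟨fun ⟨hr, hk, hc⟩ => ⟨⟨hr, hk⟩, hr, hc⟩, fun ⟨⟨hr, hk⟩, _, hc⟩ => ⟨hr, hk, hc⟩⟩

theorem IsSemiFredholm.mul_mul_of_isUnit {S u v : X →L[ℂ] X} (hS : IsSemiFredholm S)
    (hu : IsUnit u) (hv : IsUnit v) : IsSemiFredholm (u * S * v) := by
  obtain ⟨u, rfl⟩ := hu
  obtain ⟨v, rfl⟩ := hv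
  rw [isSemiFredholm_iff] at hS ⊢
  exact hS.imp (·.equiv_comp_comp_equiv (.unitsEquiv ℂ X u) (.unitsEquiv ℂ X v))
    (·.equiv_comp_comp_equiv (.unitsEquiv ℂ X u) (.unitsEquiv ℂ X v))

theorem IsFredholmOp.mul_mul_of_isUnit {S u v : X →L[ℂ] X} (hS : IsFredholmOp S)
    (hu : IsUnit u) (hv : IsUnit v) : IsFredholmOp (u * S * v) := by
  obtain ⟨u, rfl⟩ := hu
  obtain ⟨v, rfl⟩ := hv
  rw [isFredholmOp_iff] at hS ⊢
  exact hS.imp (·.equiv_comp_comp_equiv (.unitsEquiv ℂ X u) (.unitsEquiv ℂ X v))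
    (·.equiv_comp_comp_equiv (.unitsEquiv ℂ X u) (.unitsEquiv ℂ X v))

variable [CompleteSpace X]

theorem isOpen_setOf_isSemiFredholm : IsOpen {S : X →L[ℂ] X | IsSemiFredholm S} := by
  simp_rw [isSemiFredholm_iff, Set.ofPred_or]
  exact isOpen_setOf_isUpperSemiFredholm.union isOpen_setOf_isLowerSemiFredholm

theorem isOpen_setOf_isFredholmOp : IsOpen {S : X →L[ℂ] X | IsFredholmOp S} := by
  simp_rw [isFredholmOp_iff, Set.ofPred_and]
  exact isOpen_setOf_isUpperSemiFredholm.inter isOpen_setOf_isLowerSemiFredholm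

end Operators

theorem Circle.denseRange_zpow {z : Circle} (hz : ¬ IsOfFinOrder z) :
    DenseRange (z ^ · : ℤ → Circle) := by
  let e := AddCircle.homeomorphCircle (one_ne_zero : (1 : ℝ) ≠ 0)
  obtain ⟨x, rfl⟩ := e.surjective z
  have hx : addOrderOf x = 0 := by
    rw [addOrderOf_eq_zero_iff, isOfFinAddOrder_iff_nsmul_eq_zero]
    rintro ⟨n, hn, hnx⟩
    refine hz (isOfFinOrder_iff_pow_eq_one.2 ⟨n, hn, ?_⟩)
    rw [AddCircle.homeomorphCircle_apply, ← AddCircle.toCircle_nsmul, hnx,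
      AddCircle.toCircle_zero]
  convert e.surjective.denseRange.comp (AddCircle.denseRange_zsmul_iff.2 hx) e.continuous
    using 1
  ext n
  simp [e, AddCircle.homeomorphCircle_apply, AddCircle.toCircle_zsmul]

theorem RotationInvariant.of_isClosed_of_mul_mem {s : Set ℂ} (hs : IsClosed s) {γ : ℂ}
    (hγ : ‖γ‖ = 1) (hroot : ∀ n : ℕ, 1 ≤ n → γ ^ n ≠ 1) (hmul : ∀ l ∈ s, γ * l ∈ s) :
    RotationInvariant s := by
  let z : Circle := ⟨γ, mem_sphere_zero_iff_norm.2 hγ⟩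
  have hz : ¬ IsOfFinOrder z := by
    rw [isOfFinOrder_iff_pow_eq_one]
    rintro ⟨n, hn, hzn⟩
    have hγn := congrArg ((↑) : Circle → ℂ) hzn
    rw [Circle.coe_pow, Circle.coe_one] at hγn
    exact hroot n hn hγn
  -- positive powers suffice because `Circle` is a compact group
  have hdense : DenseRange (z ^ · : ℕ → Circle) :=
    denseRange_zpow_iff_pow.1 (Circle.denseRange_zpow hz)
  intro l hl μ hμ
  have hpow : ∀ n : ℕ, ((z ^ n : Circle) : ℂ) * l ∈ s := by
    intro n
    induction n with
    | zero => simpa using hl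
    | succ n ih =>
      rw [pow_succ', Circle.coe_mul, mul_assoc]
      exact hmul _ ih
  exact hdense.induction_on (p := fun w : Circle => (w : ℂ) * l ∈ s)
    ⟨μ, mem_sphere_zero_iff_norm.2 hμ⟩ (hs.preimage (by fun_prop)) hpow

section Conjugation

variable {𝕜 R : Type*} [Field 𝕜] [Ring R] [Algebra 𝕜 R]

theorem mul_mul_eq_smul_of_mul_mul_eq_smul {U V A B w : R} {γ : 𝕜} (hVU : V * U = 1)
    (hAB : A * B = 1) (hBA : B * A = 1) (hA : U * A * V = γ • A) (hwA : w * A = A * w) :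
    B * (w * U) * A = γ • (w * U) := by
  have hUA : U * A = γ • (A * U) := by
    rw [← smul_mul_assoc, ← hA, mul_assoc _ V, hVU, mul_one]
  have hBw : B * w = w * B := by
    calc B * w = B * (w * A) * B := by rw [mul_assoc, mul_assoc, hAB, mul_one]
      _ = (B * A) * w * B := by rw [hwA]; noncomm_ring
      _ = w * B := by rw [hBA, one_mul]
  calc B * (w * U) * A = w * (B * (U * A)) := by rw [← mul_assoc B, hBw]; noncomm_ring
    _ = γ • (w * (B * A) * U) := by rw [hUA, mul_smul_comm, mul_smul_comm]; noncomm_ring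
    _ = γ • (w * U) := by rw [hBA, mul_one]

theorem smul_one_sub_eq_mul_mul {T A B : R} {γ : 𝕜} (hγ : γ ≠ 0) (hBA : B * A = 1)
    (hT : B * T * A = γ • T) (l : 𝕜) :
    l • (1 : R) - T = (γ⁻¹ • B) * ((γ * l) • (1 : R) - T) * A := by
  rw [smul_mul_assoc, smul_mul_assoc, mul_sub, sub_mul, hT, mul_smul_comm, smul_mul_assoc,
    mul_one, hBA, smul_sub, smul_smul, smul_smul, inv_mul_cancel_left₀ hγ,
    inv_mul_cancel₀ hγ, one_smul]

end Conjugation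

theorem RotationInvariant.setOf_not_smul_one_sub {R : Type*} [NormedRing R] [NormedAlgebra ℂ R]
    {P : R → Prop} (hopen : IsOpen {a | P a})
    (hunit : ∀ a u v : R, IsUnit u → IsUnit v → P a → P (u * a * v))
    {T A B : R} {γ : ℂ} (hγ : ‖γ‖ = 1) (hroot : ∀ n : ℕ, 1 ≤ n → γ ^ n ≠ 1)
    (hAB : A * B = 1) (hBA : B * A = 1) (hT : B * T * A = γ • T) :
    RotationInvariant {l : ℂ | ¬ P (l • (1 : R) - T)} := by
  have hγ0 : γ ≠ 0 := norm_ne_zero_iff.1 (hγ ▸ one_ne_zero)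
  have hB : IsUnit (γ⁻¹ • B) :=
    ⟨⟨γ⁻¹ • B, γ • A, by simp [hBA, hγ0], by simp [hAB, hγ0]⟩, rfl⟩
  refine .of_isClosed_of_mul_mem (hopen.isClosed_compl.preimage (by fun_prop)) hγ hroot ?_
  intro l hl hγl
  rw [Set.mem_ofPred_eq, smul_one_sub_eq_mul_mul hγ0 hBA hT] at hl
  exact hl (hunit _ _ _ hB ⟨⟨A, B, hAB, hBA⟩, rfl⟩ hγl)

theorem statement_3_general {X : Type*} [NormedAddCommGroup X] [NormedSpace ℂ X] [CompleteSpace X]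
    (U V A B w T : X →L[ℂ] X) (γ : ℂ)
    (hVU : V * U = 1) (hγ : ‖γ‖ = 1)
    (hroot : ∀ n : ℕ, 1 ≤ n → γ ^ n ≠ 1)
    (hAB : A * B = 1) (hBA : B * A = 1)
    (hA : U * A * V = γ • A)
    (hwA : w * A = A * w)
    (hT : T = w * U) :
    RotationInvariant (spectrum ℂ T) ∧ RotationInvariant (sigma1 T) ∧
      RotationInvariant (sigma3 T) := by
  have hconj : B * T * A = γ • T :=
    hT ▸ mul_mul_eq_smul_of_mul_mul_eq_smul hVU hAB hBA hA hwA
  have hspectrum : spectrum ℂ T = {l : ℂ | ¬ IsUnit (l • (1 : X →L[ℂ] X) - T)} := by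
    ext l
    rw [spectrum.mem_iff, Algebra.algebraMap_eq_smul_one]
    rfl
  refine ⟨hspectrum ▸ ?_, ?_, ?_⟩
  · exact .setOf_not_smul_one_sub Units.isOpen (fun _ _ _ hu hv h => (hu.mul h).mul hv)
      hγ hroot hAB hBA hconj
  · exact .setOf_not_smul_one_sub isOpen_setOf_isSemiFredholm
      (fun _ _ _ hu hv h => h.mul_mul_of_isUnit hu hv) hγ hroot hAB hBA hconj
  · exact .setOf_not_smul_one_sub isOpen_setOf_isFredholmOp
      (fun _ _ _ hu hv h => h.mul_mul_of_isUnit hu hv) hγ hroot hAB hBA hconj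

theorem statement_3 {X : Type*} [NormedAddCommGroup X] [NormedSpace ℂ X] [CompleteSpace X]
    (U V A B w T : X →L[ℂ] X) (γ : ℂ)
    (hUV : U * V = 1) (hVU : V * U = 1) (hγ : ‖γ‖ = 1)
    (hroot : ∀ n : ℕ, 1 ≤ n → γ ^ n ≠ 1)
    (hAB : A * B = 1) (hBA : B * A = 1)
    (hA : U * A * V = γ • A)
    (hwA : w * A = A * w)
    (hT : T = w * U) :
    RotationInvariant (spectrum ℂ T) ∧ RotationInvariant (sigma1 T) ∧
      RotationInvariant (sigma3 T) :=
  statement_3_general U V A B w T γ hVU hγ hroot hAB hBA hA hwA hT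
end

section
/- Let X be a nonzero complex Banach space, A a bounded operator on X with spectral radius ρ(A), and let c₁, …, c_j ∈ ℂ (j ≥ 1) satisfy |c_k| ≠ ρ(A) for every k. Then the limit as n → ∞ of ‖(c₁ⁿ I − Aⁿ)(c₂ⁿ I − Aⁿ) ⋯ (c_jⁿ I − Aⁿ)‖^{1/n} exists and equals the product over k = 1, …, j of max(ρ(A), |c_k|). -/
/-!
Let `z` be a spectral value of `A` with `‖z‖ = ρ(A)`. By spectral mapping, `∏ₖ (cₖⁿ - zⁿ)` lies in
the spectrum of `Pₙ = ∏ₖ (cₖⁿ - Aⁿ)`, so `∏ₖ |ρ(A)ⁿ - ‖cₖ‖ⁿ| ≤ ‖Pₙ‖`, while submultiplicativity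
gives `‖Pₙ‖ ≤ ∏ₖ (‖Aⁿ‖ + ‖cₖ‖ⁿ)`. Since `‖cₖ‖ ≠ ρ(A)`, the `n`-th roots of the lower bound tend to
`∏ₖ max ρ(A) ‖cₖ‖`, and by Gelfand's formula so do those of the upper bound.
-/

open Filter Topology Polynomial

lemma tendsto_rpow_inv_natCast_one {u : ℕ → ℝ} {L : ℝ} (hL : L ≠ 0)
    (hu : Tendsto u atTop (𝓝 L)) :
    Tendsto (fun n : ℕ => u n ^ (n⁻¹ : ℝ)) atTop (𝓝 1) := by
  simpa using hu.rpow tendsto_inv_atTop_nhds_zero_nat (Or.inl hL)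

lemma tendsto_pow_rpow_inv_natCast {a : ℝ} (ha : 0 ≤ a) :
    Tendsto (fun n : ℕ => (a ^ n) ^ (n⁻¹ : ℝ)) atTop (𝓝 a) :=
  tendsto_const_nhds.congr' <| (eventually_ne_atTop 0).mono fun _ hn =>
    (Real.pow_rpow_inv_natCast ha hn).symm

lemma tendsto_add_rpow_inv_natCast {u v : ℕ → ℝ} {s t : ℝ} (hu : ∀ n, 0 ≤ u n)
    (hv : ∀ n, 0 ≤ v n) (hus : Tendsto (fun n : ℕ => u n ^ (n⁻¹ : ℝ)) atTop (𝓝 s))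
    (hvt : Tendsto (fun n : ℕ => v n ^ (n⁻¹ : ℝ)) atTop (𝓝 t)) :
    Tendsto (fun n : ℕ => (u n + v n) ^ (n⁻¹ : ℝ)) atTop (𝓝 (max s t)) := by
  have hmax := hus.max hvt
  have htwo : Tendsto (fun n : ℕ => (2 : ℝ) ^ (n⁻¹ : ℝ)) atTop (𝓝 1) :=
    tendsto_rpow_inv_natCast_one two_ne_zero tendsto_const_nhds
  refine tendsto_of_tendsto_of_tendsto_of_le_of_le hmax (by simpa using htwo.mul hmax)
    (fun n => ?_) (fun n => ?_)
  · exact max_le (Real.rpow_le_rpow (hu n) (by linarith [hv n]) (by positivity))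
      (Real.rpow_le_rpow (hv n) (by linarith [hu n]) (by positivity))
  · calc (u n + v n) ^ (n⁻¹ : ℝ) ≤ (2 * max (u n) (v n)) ^ (n⁻¹ : ℝ) := by
          gcongr
          · exact add_nonneg (hu n) (hv n)
          · linarith [le_max_left (u n) (v n), le_max_right (u n) (v n)]
      _ = 2 ^ (n⁻¹ : ℝ) * max (u n ^ (n⁻¹ : ℝ)) (v n ^ (n⁻¹ : ℝ)) := by
          rw [Real.mul_rpow zero_le_two ((hu n).trans (le_max_left _ _)),
            Real.rpow_max (hu n) (hv n) (by positivity)]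

lemma tendsto_abs_pow_sub_pow_rpow_inv_natCast {a b : ℝ} (ha : 0 ≤ a) (hb : 0 ≤ b)
    (hab : a ≠ b) :
    Tendsto (fun n : ℕ => |a ^ n - b ^ n| ^ (n⁻¹ : ℝ)) atTop (𝓝 (max a b)) := by
  wlog hba : b < a generalizing a b
  · simpa only [abs_sub_comm, max_comm] using
      this hb ha hab.symm (lt_of_le_of_ne (not_lt.mp hba) hab)
  have ha0 : 0 < a := hb.trans_lt hba
  have hq : Tendsto (fun n : ℕ => 1 - (b / a) ^ n) atTop (𝓝 1) := by
    simpa using tendsto_const_nhds.sub (tendsto_pow_atTop_nhds_zero_of_lt_one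
      (div_nonneg hb ha0.le) ((div_lt_one ha0).mpr hba))
  have hfactor : ∀ n : ℕ, |a ^ n - b ^ n| = a ^ n * (1 - (b / a) ^ n) := fun n => by
    rw [abs_of_nonneg (sub_nonneg.mpr (pow_le_pow_left₀ hb hba.le n)), div_pow,
      mul_sub, mul_div_cancel₀ _ (pow_ne_zero n ha0.ne'), mul_one]
  have hlim := (tendsto_pow_rpow_inv_natCast ha0.le).mul
    (tendsto_rpow_inv_natCast_one one_ne_zero hq)
  rw [mul_one] at hlim
  rw [max_eq_left hba.le]
  refine hlim.congr fun n => ?_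
  rw [hfactor, Real.mul_rpow (by positivity)]
  linarith [pow_le_one₀ (div_nonneg hb ha0.le) ((div_lt_one ha0).mpr hba).le (n := n)]

lemma tendsto_prod_rpow_inv_natCast {ι : Type*} (s : Finset ι) {u : ι → ℕ → ℝ} {L : ι → ℝ}
    (hu : ∀ i ∈ s, ∀ n, 0 ≤ u i n)
    (hL : ∀ i ∈ s, Tendsto (fun n : ℕ => u i n ^ (n⁻¹ : ℝ)) atTop (𝓝 (L i))) :
    Tendsto (fun n : ℕ => (∏ i ∈ s, u i n) ^ (n⁻¹ : ℝ)) atTop (𝓝 (∏ i ∈ s, L i)) :=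
  (tendsto_finsetProd s hL).congr fun n =>
    Real.finsetProd_rpow s _ (fun i hi => hu i hi n) _

lemma norm_aeval_prod_le {R A ι : Type*} [CommSemiring R] [SeminormedRing A] [NormOneClass A]
    [Algebra R A] (a : A) (s : Finset ι) (p : ι → R[X]) :
    ‖aeval a (∏ i ∈ s, p i)‖ ≤ ∏ i ∈ s, ‖aeval a (p i)‖ := by
  classical
  induction s using Finset.induction_on with
  | empty => simp
  | insert i s hi ih =>
    rw [Finset.prod_insert hi, Finset.prod_insert hi, map_mul]
    exact (norm_mul_le _ _).trans (by gcongr)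

lemma norm_aeval_C_sub_X_le {𝕜 A : Type*} [NormedField 𝕜] [SeminormedRing A] [NormOneClass A]
    [NormedAlgebra 𝕜 A] (a : A) (c : 𝕜) : ‖aeval a (C c - X)‖ ≤ ‖c‖ + ‖a‖ := by
  simpa [norm_algebraMap'] using norm_sub_le (algebraMap 𝕜 A c) a

lemma norm_eval_le_norm_aeval_of_mem_spectrum {𝕜 A : Type*} [NormedField 𝕜] [NormedRing A]
    [NormedAlgebra 𝕜 A] [CompleteSpace A] [NormOneClass A] {a : A} {z : 𝕜}
    (hz : z ∈ spectrum 𝕜 a) (p : 𝕜[X]) : ‖eval z p‖ ≤ ‖aeval a p‖ :=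
  spectrum.norm_le_norm_of_mem (spectrum.subset_polynomial_aeval a p ⟨z, hz, rfl⟩)

section ComplexBanachAlgebra

variable {A : Type*} [NormedRing A] [NormedAlgebra ℂ A] [CompleteSpace A]

lemma tendsto_norm_pow_rpow_inv_natCast_spectralRadius [NormOneClass A] (a : A) :
    Tendsto (fun n : ℕ => ‖a ^ n‖ ^ (n⁻¹ : ℝ)) atTop (𝓝 (spectralRadius ℂ a).toReal) := by
  have hfin : spectralRadius ℂ a ≠ ⊤ :=
    ((spectrum.spectralRadius_le_nnnorm a).trans_lt ENNReal.coe_lt_top).ne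
  refine ((ENNReal.tendsto_toReal hfin).comp
    (spectrum.pow_nnnorm_pow_one_div_tendsto_nhds_spectralRadius a)).congr fun n => ?_
  simp [← ENNReal.toReal_rpow, one_div]

lemma exists_mem_spectrum_norm_eq_spectralRadius [Nontrivial A] (a : A) :
    ∃ z ∈ spectrum ℂ a, ‖z‖ = (spectralRadius ℂ a).toReal := by
  obtain ⟨z, hz, hnorm⟩ := spectrum.exists_nnnorm_eq_spectralRadius a
  exact ⟨z, hz, by simpa using congrArg ENNReal.toReal hnorm⟩

theorem tendsto_norm_aeval_prod_C_pow_sub_X_rpow_inv_natCast [NormOneClass A] [Nontrivial A] (a : A)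
    {ι : Type*} (s : Finset ι) (c : ι → ℂ)
    (hc : ∀ i ∈ s, ‖c i‖ ≠ (spectralRadius ℂ a).toReal) :
    Tendsto (fun n : ℕ => ‖aeval (a ^ n) (∏ i ∈ s, (C (c i ^ n) - X))‖ ^ (n⁻¹ : ℝ)) atTop
      (𝓝 (∏ i ∈ s, max (spectralRadius ℂ a).toReal ‖c i‖)) := by
  obtain ⟨z, hz, hzρ⟩ := exists_mem_spectrum_norm_eq_spectralRadius a
  set ρ := (spectralRadius ℂ a).toReal
  have hlower : ∀ n : ℕ, ∏ i ∈ s, |ρ ^ n - ‖c i‖ ^ n| ≤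
      ‖aeval (a ^ n) (∏ i ∈ s, (C (c i ^ n) - X))‖ := fun n =>
    calc ∏ i ∈ s, |ρ ^ n - ‖c i‖ ^ n| ≤ ∏ i ∈ s, ‖c i ^ n - z ^ n‖ := by
          gcongr with i
          rw [norm_sub_rev, ← hzρ, ← norm_pow, ← norm_pow]
          exact abs_norm_sub_norm_le _ _
      _ = ‖eval (z ^ n) (∏ i ∈ s, (C (c i ^ n) - X))‖ := by simp [eval_prod, norm_prod]
      _ ≤ _ := norm_eval_le_norm_aeval_of_mem_spectrum (spectrum.pow_mem_pow a n hz) _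
  have hupper : ∀ n : ℕ, ‖aeval (a ^ n) (∏ i ∈ s, (C (c i ^ n) - X))‖ ≤
      ∏ i ∈ s, (‖a ^ n‖ + ‖c i‖ ^ n) := fun n =>
    (norm_aeval_prod_le _ _ _).trans <| Finset.prod_le_prod (fun _ _ => norm_nonneg _)
      fun i _ => by simpa [add_comm] using norm_aeval_C_sub_X_le (a ^ n) (c i ^ n)
  have hρ : 0 ≤ ρ := ENNReal.toReal_nonneg
  refine tendsto_of_tendsto_of_tendsto_of_le_of_le
    (tendsto_prod_rpow_inv_natCast s (fun _ _ _ => abs_nonneg _)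
      fun i hi => tendsto_abs_pow_sub_pow_rpow_inv_natCast hρ (norm_nonneg _) (hc i hi).symm)
    (tendsto_prod_rpow_inv_natCast s (fun _ _ _ => by positivity)
      fun i _ => tendsto_add_rpow_inv_natCast (fun _ => norm_nonneg _) (fun _ => by positivity)
        (tendsto_norm_pow_rpow_inv_natCast_spectralRadius a)
        (tendsto_pow_rpow_inv_natCast (norm_nonneg _)))
    (fun n => ?_) (fun n => ?_)
  · exact Real.rpow_le_rpow (Finset.prod_nonneg fun _ _ => abs_nonneg _) (hlower n)
      (by positivity)
  · exact Real.rpow_le_rpow (norm_nonneg _) (hupper n) (by positivity)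

end ComplexBanachAlgebra

theorem statement_10_general {X : Type*} [NormedAddCommGroup X] [NormedSpace ℂ X] [CompleteSpace X]
    [Nontrivial X]
    (A : X →L[ℂ] X) (j : ℕ) (c : Fin j → ℂ)
    (hc : ∀ k : Fin j, ‖c k‖ ≠ (spectralRadius ℂ A).toReal) :
    Tendsto
      (fun n : ℕ =>
        ‖(Polynomial.aeval (A ^ n) (∏ k : Fin j, (Polynomial.C (c k ^ n) - Polynomial.X)) :
            X →L[ℂ] X)‖ ^ ((n : ℝ)⁻¹))
      atTop
      (nhds (∏ k : Fin j, max ((spectralRadius ℂ A).toReal) ‖c k‖)) :=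
  tendsto_norm_aeval_prod_C_pow_sub_X_rpow_inv_natCast A Finset.univ c fun k _ => hc k

theorem statement_10 {X : Type*} [NormedAddCommGroup X] [NormedSpace ℂ X] [CompleteSpace X]
    [Nontrivial X]
    (A : X →L[ℂ] X) (j : ℕ) (hj : 1 ≤ j) (c : Fin j → ℂ)
    (hc : ∀ k : Fin j, ‖c k‖ ≠ (spectralRadius ℂ A).toReal) :
    Tendsto
      (fun n : ℕ =>
        ‖(Polynomial.aeval (A ^ n) (∏ k : Fin j, (Polynomial.C (c k ^ n) - Polynomial.X)) :
            X →L[ℂ] X)‖ ^ ((n : ℝ)⁻¹))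
      atTop
      (nhds (∏ k : Fin j, max ((spectralRadius ℂ A).toReal) ‖c k‖)) :=
  statement_10_general A j c hc
end

section
/- Let G be a compact Hausdorff abelian topological group, h ∈ G, and let H be the closure in G of the subgroup generated by h, with m_H the normalized Haar probability measure on H. Let w : G → ℂ be continuous with w(g) ≠ 0 for all g ∈ G, and let T be the bounded operator on the Banach space C(G, ℂ) of continuous complex-valued functions on G with the sup norm defined by (Tf)(g) = w(g) f(hg). Then the spectral radius of T equals the supremum over t ∈ G of exp(∫_H log|w(t s)| dm_H(s)). -/
/-!
Write `T f = w · (f ∘ σ)` with `σ = (h * ·)`. Then `(Tⁿ 1)(g) = ∏_{k<n} w(hᵏ g)` and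
`‖Tⁿ‖ = ‖Tⁿ 1‖`, so Gelfand's formula gives `ρ(T) = lim exp (sup_g Aₙ(g))`, where `Aₙ` is the
`n`-th Birkhoff average of `log |w|` under the rotation by `h`. These averages converge uniformly
to `t ↦ ∫_H log |w(t s)| dm_H(s)`: they lie in the compact closed convex hull of the translates of
`log |w|`, and any cluster point is invariant under `h`, hence under `H`, hence equal to its own
`m_H`-average, which is the `m_H`-average of `log |w|` because `m_H` is invariant under `h`.
-/

open Filter Topology MeasureTheory Function Set

section Birkhoff

variable {α R M E : Type*}

lemma continuous_birkhoffSum [TopologicalSpace α] [TopologicalSpace M]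
    [AddCommMonoid M] [ContinuousAdd M] {f : α → α} {g : α → M} (hf : Continuous f)
    (hg : Continuous g) (n : ℕ) : Continuous (birkhoffSum f g n) :=
  continuous_finsetSum _ fun k _ => hg.comp (hf.iterate k)

lemma birkhoffAverage_apply_of_commute [DivisionSemiring R] [AddCommMonoid M] [Module R M]
    {f e : α → α} (hfe : Function.Commute f e) (g : α → M) (n : ℕ) (x : α) :
    birkhoffAverage R f g n (e x) = birkhoffAverage R f (g ∘ e) n x := by
  simp only [birkhoffAverage, birkhoffSum, comp_apply, (hfe.iterate_left _).eq]

lemma birkhoffAverage_mem_convexHull [AddCommGroup M] [Module ℝ M] (f : α → α) (g : α → M)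
    {n : ℕ} (hn : n ≠ 0) (x : α) : birkhoffAverage ℝ f g n x ∈ convexHull ℝ (range g) := by
  rw [birkhoffAverage, birkhoffSum, Finset.smul_sum]
  refine (convex_convexHull ℝ _).sum_mem (fun _ _ => by positivity) ?_
    fun k _ => subset_convexHull ℝ _ (mem_range_self _)
  simp [hn]

lemma MeasureTheory.MeasurePreserving.integral_birkhoffAverage [NormedAddCommGroup E]
    [NormedSpace ℝ E] [MeasurableSpace α] {μ : Measure α} {f : α → α}
    (hf : MeasurePreserving f μ μ) {g : α → E} (hg : Integrable g μ) {n : ℕ} (hn : n ≠ 0) :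
    ∫ x, birkhoffAverage ℝ f g n x ∂μ = ∫ x, g x ∂μ := by
  have hiter : ∀ k, ∫ x, g (f^[k] x) ∂μ = ∫ x, g x ∂μ := fun k => by
    have hfk := hf.iterate k
    rw [← integral_map hfk.aemeasurable (hfk.map_eq.symm ▸ hg.aestronglyMeasurable), hfk.map_eq]
  simp only [birkhoffAverage, birkhoffSum]
  rw [integral_smul, integral_finsetSum _ fun k _ =>
    show Integrable (fun x => g (f^[k] x)) μ from (hf.iterate k).integrable_comp_of_integrable hg]
  rw [Finset.sum_congr rfl fun k _ => hiter k, Finset.sum_const, Finset.card_range,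
    ← Nat.cast_smul_eq_nsmul ℝ, inv_smul_smul₀ (Nat.cast_ne_zero.2 hn)]

end Birkhoff

lemma isCompact_closure_convexHull {E : Type*} [NormedAddCommGroup E] [NormedSpace ℝ E]
    [CompleteSpace E] {s : Set E} (hs : IsCompact s) : IsCompact (closure (convexHull ℝ s)) :=
  (totallyBounded_convexHull.2 hs.totallyBounded).closure.isCompact_of_isClosed isClosed_closure

lemma MapClusterPt.apply_eq_of_tendsto {ι X Y : Type*} [TopologicalSpace X] [TopologicalSpace Y]
    [T2Space Y] {l : Filter ι} {u : ι → X} {x : X} {F : X → Y} {y : Y} (hx : MapClusterPt x l u)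
    (hF : ContinuousAt F x) (hFu : Tendsto (F ∘ u) l (𝓝 y)) : F x = y :=
  eq_of_nhds_neBot <| (hx.continuousAt_comp hF).neBot.mono <| inf_le_inf_left _ hFu

lemma ContinuousMap.lipschitzWith_one_integral {X E : Type*} [TopologicalSpace X] [CompactSpace X]
    [MeasurableSpace X] [OpensMeasurableSpace X] [NormedAddCommGroup E] [NormedSpace ℝ E]
    (μ : Measure X) [IsProbabilityMeasure μ] :
    LipschitzWith 1 fun ψ : C(X, E) => ∫ x, ψ x ∂μ := by
  have hint : ∀ ψ : C(X, E), Integrable ψ μ := fun ψ =>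
    ψ.continuous.integrable_of_hasCompactSupport (.of_compactSpace _)
  refine LipschitzWith.of_dist_le_mul fun ψ ψ' => ?_
  rw [dist_eq_norm, ← integral_sub (hint ψ) (hint ψ'), NNReal.coe_one, one_mul, dist_eq_norm]
  simpa using norm_integral_le_of_norm_le_const (μ := μ)
    (Eventually.of_forall fun x => (ψ - ψ').norm_coe_le_norm x)

lemma TendstoUniformly.tendsto_iSup {ι α : Type*} [Nonempty α] {l : Filter ι}
    {F : ι → α → ℝ} {f : α → ℝ} (h : TendstoUniformly F f l) (hf : BddAbove (range f)) :
    Tendsto (fun i => ⨆ x, F i x) l (𝓝 (⨆ x, f x)) := by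
  refine Metric.tendsto_nhds.2 fun ε hε => ?_
  filter_upwards [Metric.tendstoUniformly_iff.1 h (ε / 2) (half_pos hε)] with i hi
  have hclose : ∀ x, |f x - F i x| < ε / 2 := fun x => by simpa [Real.dist_eq] using hi x
  have hFi : BddAbove (range (F i)) := by
    refine ⟨(⨆ x, f x) + ε / 2, forall_mem_range.2 fun x => ?_⟩
    linarith [le_ciSup hf x, (abs_sub_lt_iff.1 (hclose x)).2]
  have hle : (⨆ x, F i x) ≤ (⨆ x, f x) + ε / 2 := ciSup_le fun x => by
    linarith [le_ciSup hf x, (abs_sub_lt_iff.1 (hclose x)).2]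
  have hge : (⨆ x, f x) ≤ (⨆ x, F i x) + ε / 2 := ciSup_le fun x => by
    linarith [le_ciSup hFi x, (abs_sub_lt_iff.1 (hclose x)).1]
  rw [Real.dist_eq, abs_sub_lt_iff]
  constructor <;> linarith

section WeightedComposition

variable {X : Type*} [TopologicalSpace X] {σ : X → X} {w : C(X, ℂ)} {T : C(X, ℂ) →L[ℂ] C(X, ℂ)}

lemma weightedComposition_pow_apply (hT : ∀ f x, T f x = w x * f (σ x)) (n : ℕ) (f : C(X, ℂ))
    (x : X) :
    (T ^ n) f x = (∏ k ∈ Finset.range n, w (σ^[k] x)) * f (σ^[n] x) := by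
  induction n generalizing f with
  | zero => simp
  | succ n ih =>
    rw [pow_succ, mul_apply_eq_comp, ih, hT, Finset.prod_range_succ,
      iterate_succ_apply', mul_assoc]

lemma norm_weightedComposition_pow [CompactSpace X] (hT : ∀ f x, T f x = w x * f (σ x))
    (n : ℕ) : ‖T ^ n‖ = ‖(T ^ n) 1‖ := by
  refine le_antisymm (ContinuousLinearMap.opNorm_le_bound _ (norm_nonneg _) fun f => ?_) ?_
  · refine (ContinuousMap.norm_le _ (by positivity)).2 fun x => ?_
    have hprod := ContinuousMap.norm_coe_le_norm ((T ^ n) 1) x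
    rw [weightedComposition_pow_apply hT, ContinuousMap.one_apply, mul_one] at hprod
    rw [weightedComposition_pow_apply hT, norm_mul]
    exact mul_le_mul hprod (f.norm_coe_le_norm _) (norm_nonneg _) (norm_nonneg _)
  · have hone : ‖(1 : C(X, ℂ))‖ ≤ 1 := (ContinuousMap.norm_le _ zero_le_one).2 fun x => by simp
    exact ((T ^ n).le_opNorm 1).trans (mul_le_of_le_one_right (norm_nonneg _) hone)

lemma norm_weightedComposition_pow_one_apply (hw : ∀ x, w x ≠ 0)
    (hT : ∀ f x, T f x = w x * f (σ x)) (n : ℕ) (x : X) :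
    ‖(T ^ n) 1 x‖ = Real.exp (birkhoffSum σ (fun y => Real.log ‖w y‖) n x) := by
  rw [weightedComposition_pow_apply hT, ContinuousMap.one_apply, mul_one, norm_prod, birkhoffSum,
    Real.exp_sum]
  exact Finset.prod_congr rfl fun k _ => (Real.exp_log (norm_pos_iff.2 (hw _))).symm

lemma norm_weightedComposition_pow_rpow_one_div [CompactSpace X] [Nonempty X] (hσ : Continuous σ)
    (hw : ∀ x, w x ≠ 0) (hT : ∀ f x, T f x = w x * f (σ x)) (n : ℕ) :
    ‖T ^ n‖ ^ (1 / n : ℝ) =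
      Real.exp (⨆ x, birkhoffAverage ℝ σ (fun y => Real.log ‖w y‖) n x) := by
  have hS := continuous_birkhoffSum hσ (w.continuous.norm.log fun x => norm_ne_zero_iff.2 (hw x)) n
  rw [norm_weightedComposition_pow hT, ContinuousMap.norm_eq_iSup_norm]
  simp_rw [norm_weightedComposition_pow_one_apply hw hT]
  rw [← Monotone.map_ciSup_of_continuousAt Real.continuous_exp.continuousAt Real.exp_monotone
    (isCompact_range hS).bddAbove, ← Real.exp_mul, mul_comm, one_div,
    Real.mul_iSup_of_nonneg (by positivity)]
  rfl

theorem spectralRadius_weightedComposition_eq [CompactSpace X] [Nonempty X]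
    (hσ : Continuous σ) (hw : ∀ x, w x ≠ 0) (hT : ∀ f x, T f x = w x * f (σ x)) {χ : X → ℝ}
    (hχ : TendstoUniformly (birkhoffAverage ℝ σ (fun y => Real.log ‖w y‖)) χ atTop) :
    spectralRadius ℂ T = ENNReal.ofReal (⨆ x, Real.exp (χ x)) := by
  have hlog : Continuous fun y => Real.log ‖w y‖ :=
    w.continuous.norm.log fun x => norm_ne_zero_iff.2 (hw x)
  have hbdd : BddAbove (range χ) := (isCompact_range (hχ.continuous (Frequently.of_forall
    fun n => (continuous_birkhoffSum hσ hlog n).const_smul ((n : ℝ)⁻¹)))).bddAbove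
  rw [← Monotone.map_ciSup_of_continuousAt Real.continuous_exp.continuousAt Real.exp_monotone hbdd]
  refine tendsto_nhds_unique (spectrum.pow_norm_pow_one_div_tendsto_nhds_spectralRadius T) ?_
  simp_rw [norm_weightedComposition_pow_rpow_one_div hσ hw hT]
  exact (ENNReal.continuous_ofReal.tendsto _).comp
    ((Real.continuous_exp.tendsto _).comp (hχ.tendsto_iSup hbdd))

end WeightedComposition

lemma apply_mul_eq_of_mem_topologicalClosure_zpowers {G Y : Type*} [TopologicalSpace G] [Group G]
    [IsTopologicalGroup G] [TopologicalSpace Y] [T2Space Y]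
    {h : G} {χ : G → Y} (hχ : Continuous χ) (hinv : ∀ t, χ (h * t) = χ t) :
    ∀ s ∈ (Subgroup.zpowers h).topologicalClosure, ∀ t, χ (s * t) = χ t := by
  let S : Subgroup G :=
    { carrier := {s | ∀ t, χ (s * t) = χ t}
      one_mem' := fun t => by rw [one_mul]
      mul_mem' := fun ha hb t => by rw [mul_assoc, ha, hb]
      inv_mem' := fun ha t => by rw [← ha, mul_inv_cancel_left] }
  have hS : IsClosed (S : Set G) := by
    simp only [S, Subgroup.coe_set_mk, Submonoid.coe_set_mk, Subsemigroup.coe_set_mk,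
      ofPred_forall]
    exact isClosed_iInter fun t => isClosed_eq (by fun_prop) continuous_const
  exact fun s hs =>
    Subgroup.topologicalClosure_minimal _ (Subgroup.zpowers_le.2 (show h ∈ S from hinv)) hS hs

lemma integral_apply_mul_eq_of_forall_mem_apply_mul_eq {G E : Type*} [CommGroup G]
    [MeasurableSpace G] [NormedAddCommGroup E] [NormedSpace ℝ E] [CompleteSpace E] {μ : Measure G}
    [IsProbabilityMeasure μ] {H : Subgroup G} (hμ : μ (H : Set G)ᶜ = 0) {χ : G → E}
    (hχ : ∀ s ∈ H, ∀ t, χ (s * t) = χ t) (t : G) : ∫ s, χ (t * s) ∂μ = χ t := by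
  have hae : ∀ᵐ s ∂μ, s ∈ H := ae_iff.2 hμ
  rw [integral_congr_ae (hae.mono fun s hs => by rw [mul_comm, hχ s hs]), integral_const]
  simp

section Rotation

variable {G : Type*} [TopologicalSpace G] [CommGroup G] [IsTopologicalGroup G] [CompactSpace G]
  [MeasurableSpace G] [BorelSpace G] {h : G} {μ : Measure G} [IsProbabilityMeasure μ]
  {φ : G → ℝ}

lemma apply_eq_integral_of_mapClusterPt_birkhoffAverage
    (hμH : μ ((Subgroup.zpowers h).topologicalClosure : Set G)ᶜ = 0)
    (hμh : Measure.map (h * ·) μ = μ) (hφ : Continuous φ) {A : ℕ → C(G, ℝ)}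
    (hA : ∀ n, ⇑(A n) = birkhoffAverage ℝ (h * ·) φ n) {χ : C(G, ℝ)}
    (hχ : MapClusterPt χ atTop A) (t : G) : χ t = ∫ s, φ (t * s) ∂μ := by
  have hinv : ∀ t, χ (h * t) = χ t := fun t => sub_eq_zero.1 <|
    hχ.apply_eq_of_tendsto (F := fun ψ : C(G, ℝ) => ψ (h * t) - ψ t) (by fun_prop) <| by
      simpa only [comp_def, hA] using
        tendsto_birkhoffAverage_apply_sub_birkhoffAverage' ℝ (isCompact_range hφ).isBounded _ t
  have hI : Continuous fun ψ : C(G, ℝ) => ∫ s, ψ (t * s) ∂μ :=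
    (ContinuousMap.lipschitzWith_one_integral μ).continuous.comp
      (ContinuousMap.continuous_precomp (ContinuousMap.mulLeft t))
  have hav : ∀ n ≠ 0, ∫ s, A n (t * s) ∂μ = ∫ s, φ (t * s) ∂μ := fun n hn => by
    have hrot : MeasurePreserving (h * ·) μ μ := ⟨measurable_const_mul h, hμh⟩
    simp only [hA, birkhoffAverage_apply_of_commute (fun x => mul_left_comm h t x)]
    exact hrot.integral_birkhoffAverage
      ((hφ.comp (continuous_const_mul t)).integrable_of_hasCompactSupport (.of_compactSpace _)) hn
  calc χ t = ∫ s, χ (t * s) ∂μ := (integral_apply_mul_eq_of_forall_mem_apply_mul_eq hμH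
        (apply_mul_eq_of_mem_topologicalClosure_zpowers χ.continuous hinv) t).symm
    _ = ∫ s, φ (t * s) ∂μ := hχ.apply_eq_of_tendsto hI.continuousAt <|
        tendsto_const_nhds.congr' <| (eventually_ne_atTop 0).mono fun n hn => (hav n hn).symm

theorem tendstoUniformly_birkhoffAverage_mul_left
    (hμH : μ ((Subgroup.zpowers h).topologicalClosure : Set G)ᶜ = 0)
    (hμh : Measure.map (h * ·) μ = μ) (hφ : Continuous φ) :
    TendstoUniformly (birkhoffAverage ℝ (h * ·) φ) (fun t => ∫ s, φ (t * s) ∂μ) atTop := by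
  let Θ : C(G, C(G, ℝ)) := ContinuousMap.curry ⟨fun p : G × G => φ (p.1 * p.2), by fun_prop⟩
  let A : ℕ → C(G, ℝ) := fun n => birkhoffAverage ℝ (h * ·) Θ n 1
  have hA : ∀ n, ⇑(A n) = birkhoffAverage ℝ (h * ·) φ n := fun n => by
    ext x
    simp [A, Θ, birkhoffAverage, birkhoffSum]
  have hK : IsCompact (closure (convexHull ℝ (range Θ))) :=
    isCompact_closure_convexHull (isCompact_range Θ.continuous)
  have hAK : ∀ᶠ n in atTop, A n ∈ closure (convexHull ℝ (range Θ)) :=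
    (eventually_ne_atTop 0).mono fun n hn =>
      subset_closure (birkhoffAverage_mem_convexHull _ _ hn 1)
  obtain ⟨χ, -, hχ⟩ := hK.exists_mapClusterPt_of_frequently hAK.frequently
  have hχint := apply_eq_integral_of_mapClusterPt_birkhoffAverage hμH hμh hφ hA hχ
  have hlim : Tendsto A atTop (𝓝 χ) :=
    hK.tendsto_nhds_of_unique_mapClusterPt hAK fun χ' _ hχ' => ContinuousMap.ext fun t =>
      (apply_eq_integral_of_mapClusterPt_birkhoffAverage hμH hμh hφ hA hχ' t).trans (hχint t).symm
  rw [ContinuousMap.tendsto_iff_tendstoUniformly] at hlim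
  simpa only [hA, funext hχint] using hlim

end Rotation

theorem statement_11_general {G : Type*} [TopologicalSpace G] [CommGroup G] [IsTopologicalGroup G]
    [CompactSpace G] [MeasurableSpace G] [BorelSpace G]
    (h : G) (μ : Measure G) [IsProbabilityMeasure μ]
    -- μ is the Haar probability measure of the closed subgroup H generated by h,
    -- viewed as a measure on G: it is concentrated on H and invariant under
    -- translation by elements of H
    (hμH : μ ((((Subgroup.zpowers h).topologicalClosure : Subgroup G) : Set G))ᶜ = 0)
    (hμinv : ∀ g ∈ (Subgroup.zpowers h).topologicalClosure,
      Measure.map (fun s => g * s) μ = μ)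
    (w : C(G, ℂ)) (hw : ∀ g : G, w g ≠ 0)
    (T : C(G, ℂ) →L[ℂ] C(G, ℂ))
    (hT : ∀ (f : C(G, ℂ)) (g : G), (T f) g = w g * f (h * g)) :
    (spectralRadius ℂ T).toReal = ⨆ t : G, Real.exp (∫ s, Real.log ‖w (t * s)‖ ∂μ) := by
  have : Nonempty G := ⟨1⟩
  have hμh : Measure.map (h * ·) μ = μ :=
    hμinv h (Subgroup.le_topologicalClosure _ (Subgroup.mem_zpowers h))
  have hlog : Continuous fun g => Real.log ‖w g‖ :=
    w.continuous.norm.log fun g => norm_ne_zero_iff.2 (hw g)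
  rw [spectralRadius_weightedComposition_eq (continuous_const_mul h) hw hT
    (tendstoUniformly_birkhoffAverage_mul_left hμH hμh hlog),
    ENNReal.toReal_ofReal (Real.iSup_nonneg fun _ => (Real.exp_pos _).le)]

theorem statement_11 {G : Type*} [TopologicalSpace G] [CommGroup G] [IsTopologicalGroup G]
    [CompactSpace G] [T2Space G] [MeasurableSpace G] [BorelSpace G]
    (h : G) (μ : Measure G) [IsProbabilityMeasure μ]
    -- μ is the Haar probability measure of the closed subgroup H generated by h,
    -- viewed as a measure on G: it is concentrated on H and invariant under
    -- translation by elements of H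
    (hμH : μ ((((Subgroup.zpowers h).topologicalClosure : Subgroup G) : Set G))ᶜ = 0)
    (hμinv : ∀ g ∈ (Subgroup.zpowers h).topologicalClosure,
      Measure.map (fun s => g * s) μ = μ)
    (w : C(G, ℂ)) (hw : ∀ g : G, w g ≠ 0)
    (T : C(G, ℂ) →L[ℂ] C(G, ℂ))
    (hT : ∀ (f : C(G, ℂ)) (g : G), (T f) g = w g * f (h * g)) :
    (spectralRadius ℂ T).toReal = ⨆ t : G, Real.exp (∫ s, Real.log ‖w (t * s)‖ ∂μ) :=
  statement_11_general h μ hμH hμinv w hw T hT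
end

section
/- Let Ω be an open connected subset of ℂ which contains 0 and is rotation invariant (α·z ∈ Ω whenever z ∈ Ω and |α| = 1). Let α ∈ ℂ with |α| = 1, let w : Ω → ℂ be analytic and not identically 0, and suppose λ ∈ ℂ and x : Ω → ℂ is analytic, not identically 0, with w(z)·x(α·z) = λ·x(z) for all z ∈ Ω. Then: (a) for every R > 0 such that the open disc {z : |z| < R} is contained in Ω, w has no zeros in that disc; and (b) there exists an integer k ≥ 0 such that λ = αᵏ·w(0). -/
/-!
Writing `x z = z ^ k * g z` with `g 0 ≠ 0` and comparing lowest-order terms of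
`w z * x (α z) = λ x z` at the origin gives `λ = α ^ k * w 0`; comparing orders there gives
`λ ≠ 0`. Hence a zero `z₀` of `w` forces `x` to vanish along the backward orbit `α⁻ⁿ z₀`, which
lies on the circle `|z| = |z₀|`. If this orbit is infinite it accumulates there and `x ≡ 0`. If it
is periodic, the relation `ord_z w + ord_{αz} x = ord_z x` shows that the order of `x` never
increases along the forward orbit and drops strictly at `z₀`, which is impossible on a cycle.
-/

open Filter Topology

section AnalyticOrder

variable {𝕜 : Type*} [NontriviallyNormedField 𝕜]

theorem eq_of_pow_mul_eventuallyEq {F G : 𝕜 → 𝕜} {k : ℕ} (hF : ContinuousAt F 0)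
    (hG : ContinuousAt G 0) (h : ∀ᶠ z in 𝓝 0, z ^ k * F z = z ^ k * G z) : F 0 = G 0 := by
  have hne : F =ᶠ[𝓝[≠] 0] G := by
    filter_upwards [nhdsWithin_le_nhds h, self_mem_nhdsWithin] with z hz hz₀
    exact mul_left_cancel₀ (pow_ne_zero k hz₀) hz
  exact ((hF.eventuallyEq_nhds_iff_eventuallyEq_nhdsNE hG).mp hne).eq_of_nhds

theorem analyticOrderAt_const_mul {f : 𝕜 → 𝕜} {c z : 𝕜} (hf : AnalyticAt 𝕜 f z) (hc : c ≠ 0) :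
    analyticOrderAt (fun y => c * f y) z = analyticOrderAt f z := by
  rw [show (fun y => c * f y) = (fun _ => c) * f from rfl, analyticOrderAt_mul analyticAt_const hf,
    analyticAt_const.analyticOrderAt_eq_zero.mpr hc, zero_add]

theorem AnalyticOnNhd.analyticOrderAt_ne_top_of_exists_ne_zero {E : Type*} [NormedAddCommGroup E]
    [NormedSpace 𝕜 E] {f : 𝕜 → E} {U : Set 𝕜} (hf : AnalyticOnNhd 𝕜 f U) (hU : IsPreconnected U)
    (h : ∃ z ∈ U, f z ≠ 0) {z : 𝕜} (hz : z ∈ U) : analyticOrderAt f z ≠ ⊤ := by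
  obtain ⟨z₁, hz₁, hf₁⟩ := h
  refine hf.analyticOrderAt_ne_top_of_isPreconnected hU hz₁ hz ?_
  rw [(hf z₁ hz₁).analyticOrderAt_eq_zero.mpr hf₁]
  exact ENat.zero_ne_top

theorem exists_analyticOrderAt_eq_top_of_infinite_zeros {E : Type*} [NormedAddCommGroup E]
    [NormedSpace 𝕜 E] {f : 𝕜 → E} {U K S : Set 𝕜} (hf : AnalyticOnNhd 𝕜 f U) (hK : IsCompact K)
    (hKU : K ⊆ U) (hS : S.Infinite) (hSK : S ⊆ K) (hfS : ∀ z ∈ S, f z = 0) :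
    ∃ p ∈ U, analyticOrderAt f p = ⊤ := by
  obtain ⟨p, hpK, hacc⟩ := hS.exists_accPt_of_subset_isCompact hK hSK
  have hfreq : ∃ᶠ z in 𝓝[≠] p, f z = 0 := by
    rw [frequently_nhdsWithin_iff]
    exact (accPt_iff_frequently.mp hacc).mono fun z ⟨hzp, hzS⟩ => ⟨hfS z hzS, hzp⟩
  exact ⟨p, hKU hpK, analyticOrderAt_eq_top.mpr
    ((hf p (hKU hpK)).frequently_zero_iff_eventually_zero.mp hfreq)⟩

variable [CompleteSpace 𝕜] [CharZero 𝕜]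

theorem analyticOrderAt_comp_const_mul {E : Type*} [NormedAddCommGroup E] [NormedSpace 𝕜 E]
    {f : 𝕜 → E} {a z : 𝕜} (ha : a ≠ 0) :
    analyticOrderAt (fun y => f (a * y)) z = analyticOrderAt f (a * z) :=
  analyticOrderAt_comp_of_deriv_ne_zero (g := (a * ·)) (by fun_prop) (by simpa using ha)

theorem analyticOrderAt_mul_comp_const_mul {w x : 𝕜 → 𝕜} {α z : 𝕜} (hw : AnalyticAt 𝕜 w z)
    (hx : AnalyticAt 𝕜 x (α * z)) (hα : α ≠ 0) :
    analyticOrderAt (fun y => w y * x (α * y)) z =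
      analyticOrderAt w z + analyticOrderAt x (α * z) := by
  rw [← analyticOrderAt_comp_const_mul hα]
  exact analyticOrderAt_mul hw (hx.comp_of_eq (by fun_prop) rfl)

end AnalyticOrder

section WeightedCompositionEigenfunction

variable {𝕜 : Type*} [NontriviallyNormedField 𝕜] {w x : 𝕜 → 𝕜} {α l : 𝕜}

theorem eq_pow_analyticOrderNatAt_mul_of_eventually (hw : ContinuousAt w 0)
    (hx : AnalyticAt 𝕜 x 0) (hx' : analyticOrderAt x 0 ≠ ⊤)
    (h : ∀ᶠ z in 𝓝 0, w z * x (α * z) = l * x z) :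
    l = α ^ analyticOrderNatAt x 0 * w 0 := by
  set k := analyticOrderNatAt x 0
  obtain ⟨g, hg, hg0, hxg⟩ :=
    hx.analyticOrderAt_eq_natCast.mp (Nat.cast_analyticOrderNatAt hx').symm
  have hxg' : ∀ᶠ z in 𝓝 0, x z = z ^ k * g z := by simpa using hxg
  have hαz : Tendsto (α * ·) (𝓝 0) (𝓝 0) := by
    simpa using ((continuous_const_mul α).tendsto 0)
  have hgα : ContinuousAt (fun z => g (α * z)) 0 :=
    hg.continuousAt.comp_of_eq (continuous_const_mul α).continuousAt (mul_zero α)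
  have key : α ^ k * w 0 * g (α * 0) = l * g 0 := by
    refine eq_of_pow_mul_eventuallyEq (k := k) (F := fun z => α ^ k * w z * g (α * z))
      (G := fun z => l * g z) ((continuousAt_const.mul hw).mul hgα)
      (continuousAt_const.mul hg.continuousAt) ?_
    filter_upwards [h, hxg', hαz.eventually hxg'] with z hz h₁ h₂
    rw [h₁, h₂] at hz
    linear_combination hz
  rw [mul_zero] at key
  exact (mul_right_cancel₀ hg0 key).symm

variable {U : Set 𝕜} {z₀ : 𝕜}

theorem apply_inv_pow_mul_eq_zero (heig : ∀ z ∈ U, w z * x (α * z) = l * x z) (hα : α ≠ 0)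
    (hl : l ≠ 0) (horb : ∀ n : ℕ, α⁻¹ ^ n * z₀ ∈ U) (hwz₀ : w z₀ = 0) (n : ℕ) :
    x (α⁻¹ ^ n * z₀) = 0 := by
  induction n with
  | zero =>
    have h := heig z₀ (by simpa using horb 0)
    rw [hwz₀, zero_mul] at h
    simpa using (mul_eq_zero.mp h.symm).resolve_left hl
  | succ n ih =>
    have hαn : α * (α⁻¹ ^ (n + 1) * z₀) = α⁻¹ ^ n * z₀ := by
      rw [pow_succ', ← mul_assoc, ← mul_assoc, mul_inv_cancel₀ hα, one_mul]
    have h := heig _ (horb (n + 1))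
    rw [hαn, ih, mul_zero] at h
    exact (mul_eq_zero.mp h.symm).resolve_left hl

theorem apply_ne_zero_of_forall_pow_mul_ne_self [ProperSpace 𝕜] (hx : AnalyticOnNhd 𝕜 x U)
    (heig : ∀ z ∈ U, w z * x (α * z) = l * x z) (hα : ‖α‖ = 1) (hl : l ≠ 0)
    (hsphere : Metric.sphere 0 ‖z₀‖ ⊆ U) (hfin : ∀ z ∈ U, analyticOrderAt x z ≠ ⊤)
    (hper : ∀ m, 0 < m → α ^ m * z₀ ≠ z₀) : w z₀ ≠ 0 := by
  intro hwz₀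
  have hα0 : α ≠ 0 := norm_ne_zero_iff.mp (by rw [hα]; exact one_ne_zero)
  set u : ℕ → 𝕜 := fun n => α⁻¹ ^ n * z₀
  have hu : ∀ n, u n ∈ Metric.sphere 0 ‖z₀‖ := fun n => by simp [u, hα]
  have hinj : Function.Injective u := by
    intro a b hab
    by_contra hne
    wlog hlt : a < b generalizing a b
    · exact this hab.symm (Ne.symm hne) (by omega)
    obtain ⟨d, rfl⟩ := Nat.exists_eq_add_of_lt hlt
    apply hper (d + 1) d.succ_pos
    simp only [u, inv_pow, pow_add] at hab
    field_simp at hab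
    linear_combination hab
  obtain ⟨p, hp, htop⟩ := exists_analyticOrderAt_eq_top_of_infinite_zeros hx
    (isCompact_sphere 0 ‖z₀‖) hsphere (Set.infinite_range_of_injective hinj)
    (Set.range_subset_iff.mpr hu) (Set.forall_mem_range.mpr
      (apply_inv_pow_mul_eq_zero heig hα0 hl (fun n => hsphere (hu n)) hwz₀))
  exact hfin p hp htop

variable [CompleteSpace 𝕜] [CharZero 𝕜]

theorem ne_zero_of_eventually_mul_comp_eq {z : 𝕜} (hw : AnalyticAt 𝕜 w z)
    (hx : AnalyticAt 𝕜 x (α * z)) (hα : α ≠ 0) (hw' : analyticOrderAt w z ≠ ⊤)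
    (hx' : analyticOrderAt x (α * z) ≠ ⊤) (h : ∀ᶠ y in 𝓝 z, w y * x (α * y) = l * x y) :
    l ≠ 0 := by
  rintro rfl
  have htop : analyticOrderAt (fun y => w y * x (α * y)) z = ⊤ :=
    analyticOrderAt_eq_top.mpr (by simpa using h)
  rw [analyticOrderAt_mul_comp_const_mul hw hx hα] at htop
  exact WithTop.add_ne_top.mpr ⟨hw', hx'⟩ htop

theorem analyticOrderAt_add_analyticOrderAt_comp_eq {z : 𝕜} (hw : AnalyticAt 𝕜 w z)
    (hxα : AnalyticAt 𝕜 x (α * z)) (hx : AnalyticAt 𝕜 x z) (hα : α ≠ 0) (hl : l ≠ 0)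
    (h : ∀ᶠ y in 𝓝 z, w y * x (α * y) = l * x y) :
    analyticOrderAt w z + analyticOrderAt x (α * z) = analyticOrderAt x z := by
  rw [← analyticOrderAt_mul_comp_const_mul hw hxα hα, analyticOrderAt_congr h,
    analyticOrderAt_const_mul hx hl]

theorem apply_ne_zero_of_pow_mul_eq_self (hU : IsOpen U) (hw : AnalyticOnNhd 𝕜 w U)
    (hx : AnalyticOnNhd 𝕜 x U) (heig : ∀ z ∈ U, w z * x (α * z) = l * x z) (hα : α ≠ 0)
    (hl : l ≠ 0) (horb : ∀ n : ℕ, α ^ n * z₀ ∈ U) (hfin : analyticOrderAt x z₀ ≠ ⊤) {m : ℕ}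
    (hm : 0 < m) (hper : α ^ m * z₀ = z₀) : w z₀ ≠ 0 := by
  intro hwz₀
  set o : ℕ → ℕ∞ := fun n => analyticOrderAt x (α ^ n * z₀)
  have hstep : ∀ n, analyticOrderAt w (α ^ n * z₀) + o (n + 1) = o n := fun n => by
    have hαn : α * (α ^ n * z₀) = α ^ (n + 1) * z₀ := by ring
    have := analyticOrderAt_add_analyticOrderAt_comp_eq (hw _ (horb n))
      (hαn ▸ hx _ (horb (n + 1))) (hx _ (horb n)) hα hl
      (eventually_of_mem (hU.mem_nhds (horb n)) heig)
    rwa [hαn] at this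
  have hanti : Antitone o := antitone_nat_of_succ_le fun n => hstep n ▸ le_add_self
  have hdrop : o 1 + 1 ≤ o 0 := by
    rw [← hstep 0, add_comm]
    gcongr
    refine Order.one_le_iff_ne_zero.mpr ((hw _ (horb 0)).analyticOrderAt_ne_zero.mpr ?_)
    simpa using hwz₀
  have ho₀ : o 0 ≠ ⊤ := by simpa [o] using hfin
  have hcycle : o 0 + 1 ≤ o 0 := by
    calc o 0 + 1 = o m + 1 := by simp [o, hper]
      _ ≤ o 1 + 1 := by gcongr; exact hanti hm
      _ ≤ o 0 := hdrop
  exact (lt_irrefl _) ((ENat.add_one_le_iff ho₀).mp hcycle)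

end WeightedCompositionEigenfunction

theorem statement_15_general (Ω : Set ℂ) (hΩo : IsOpen Ω) (hΩc : IsConnected Ω) (h0 : (0 : ℂ) ∈ Ω)
    (α : ℂ) (hα : ‖α‖ = 1)
    (w : ℂ → ℂ) (hwa : DifferentiableOn ℂ w Ω) (hw0 : ∃ z ∈ Ω, w z ≠ 0)
    (l : ℂ) (x : ℂ → ℂ) (hxa : DifferentiableOn ℂ x Ω) (hx0 : ∃ z ∈ Ω, x z ≠ 0)
    (heig : ∀ z ∈ Ω, w z * x (α * z) = l * x z) :
    (∀ R : ℝ, 0 < R → Metric.ball (0 : ℂ) R ⊆ Ω →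
        ∀ z ∈ Metric.ball (0 : ℂ) R, w z ≠ 0) ∧
      ∃ k : ℕ, l = α ^ k * w 0 := by
  have hwA := hwa.analyticOnNhd hΩo
  have hxA := hxa.analyticOnNhd hΩo
  have hα0 : α ≠ 0 := norm_ne_zero_iff.mp (by rw [hα]; exact one_ne_zero)
  have hxfin : ∀ z ∈ Ω, analyticOrderAt x z ≠ ⊤ := fun z hz =>
    hxA.analyticOrderAt_ne_top_of_exists_ne_zero hΩc.isPreconnected hx0 hz
  have heig0 : ∀ᶠ z in 𝓝 0, w z * x (α * z) = l * x z := eventually_of_mem (hΩo.mem_nhds h0) heig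
  have hl : l ≠ 0 := ne_zero_of_eventually_mul_comp_eq (hwA 0 h0) (by simpa using hxA 0 h0) hα0
    (hwA.analyticOrderAt_ne_top_of_exists_ne_zero hΩc.isPreconnected hw0 h0)
    (by simpa using hxfin 0 h0) heig0
  refine ⟨fun R _ hball z₀ hz₀ => ?_, _, eq_pow_analyticOrderNatAt_mul_of_eventually
    (hwA 0 h0).continuousAt (hxA 0 h0) (hxfin 0 h0) heig0⟩
  have hsphere : Metric.sphere 0 ‖z₀‖ ⊆ Ω :=
    (Metric.sphere_subset_ball (by simpa using hz₀)).trans hball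
  by_cases hper : ∃ m, 0 < m ∧ α ^ m * z₀ = z₀
  · obtain ⟨m, hm, hper⟩ := hper
    exact apply_ne_zero_of_pow_mul_eq_self hΩo hwA hxA heig hα0 hl
      (fun n => hsphere (by simp [hα])) (hxfin z₀ (hball hz₀)) hm hper
  · push Not at hper
    exact apply_ne_zero_of_forall_pow_mul_ne_self hxA heig hα hl hsphere hxfin hper

theorem statement_15 (Ω : Set ℂ) (hΩo : IsOpen Ω) (hΩc : IsConnected Ω) (h0 : (0 : ℂ) ∈ Ω)
    -- Ω is rotation invariant
    (hΩrot : ∀ z ∈ Ω, ∀ a : ℂ, ‖a‖ = 1 → a * z ∈ Ω)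
    (α : ℂ) (hα : ‖α‖ = 1)
    (w : ℂ → ℂ) (hwa : DifferentiableOn ℂ w Ω) (hw0 : ∃ z ∈ Ω, w z ≠ 0)
    (l : ℂ) (x : ℂ → ℂ) (hxa : DifferentiableOn ℂ x Ω) (hx0 : ∃ z ∈ Ω, x z ≠ 0)
    (heig : ∀ z ∈ Ω, w z * x (α * z) = l * x z) :
    (∀ R : ℝ, 0 < R → Metric.ball (0 : ℂ) R ⊆ Ω →
        ∀ z ∈ Metric.ball (0 : ℂ) R, w z ≠ 0) ∧
      ∃ k : ℕ, l = α ^ k * w 0 :=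
  statement_15_general Ω hΩo hΩc h0 α hα w hwa hw0 l x hxa hx0 heig
end

section
/- Let 1 ≤ p < ∞. There exists a constant c > 0, depending only on p, such that for every analytic function f on the open unit disc 𝕌 = {z ∈ ℂ : |z| < 1}, ∫_𝕌 |z·f(z)|ᵖ dA(z) ≥ c·∫_𝕌 |f(z)|ᵖ dA(z), where dA is the two-dimensional Lebesgue (area) measure on ℂ and the integrals are Lebesgue integrals of nonnegative functions with values in [0, ∞]. (Equivalently: the operator of multiplication by the coordinate function z on the Bergman space A^p(𝕌) is bounded below.) -/
/-!
For `‖w‖ < 1/4` the annulus `1/2 < ‖z - w‖ < 3/4` lies in the region `1/4 ≤ ‖z‖ < 1`. The mean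
value property together with Jensen's inequality for `t ↦ t ^ p` makes `‖f‖ ^ p` subharmonic, and
integrating over the circles about `w` in polar coordinates gives
`area (annulus) * ‖f w‖ ^ p ≤ ∫ annulus, ‖f‖ ^ p`. Since the annulus has larger area than the disc
`‖z‖ < 1/4`, the integral of `‖f‖ ^ p` over that disc is at most its integral over
`1/4 ≤ ‖z‖ < 1`, where `‖z * f z‖ ^ p ≥ 4 ^ (-p) * ‖f z‖ ^ p`. Hence `c = 4 ^ (-p) / 2` works.
-/

open MeasureTheory Metric Set Complex Real
open scoped ENNReal

theorem convexOn_norm_rpow {F : Type*} [NormedAddCommGroup F] [NormedSpace ℝ F] {p : ℝ}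
    (hp : 1 ≤ p) : ConvexOn ℝ univ fun x : F ↦ ‖x‖ ^ p := by
  refine ⟨convex_univ, fun x _ y _ a b ha hb hab ↦ ?_⟩
  calc ‖a • x + b • y‖ ^ p ≤ (a * ‖x‖ + b * ‖y‖) ^ p := by
        gcongr
        refine (norm_add_le _ _).trans_eq ?_
        rw [norm_smul_of_nonneg ha, norm_smul_of_nonneg hb]
    _ ≤ a * ‖x‖ ^ p + b * ‖y‖ ^ p :=
        (convexOn_rpow hp).2 (norm_nonneg x) (norm_nonneg y) ha hb hab

theorem setLIntegral_annulus_eq {G : ℂ → ℝ≥0∞} {c : ℂ} {a b : ℝ} (ha : 0 ≤ a)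
    (hG : ContinuousOn G (ball c b \ closedBall c a)) :
    ∫⁻ z in ball c b \ closedBall c a, G z =
      ∫⁻ r in Ioo a b, ENNReal.ofReal r * ∫⁻ θ in Ioo (-π) π, G (circleMap c r θ) := by
  set A := ball c b \ closedBall c a
  set T : Set (ℝ × ℝ) := Ioo a b ×ˢ Ioo (-π) π
  have hA : MeasurableSet A := measurableSet_ball.diff measurableSet_closedBall
  have hT : MeasurableSet T := measurableSet_Ioo.prod measurableSet_Ioo
  have hmemA {r θ : ℝ} (hr : 0 < r) : circleMap c r θ ∈ A ↔ r ∈ Ioo a b := by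
    simp [A, dist_eq_norm, circleMap_sub_center, abs_of_pos hr, and_comm]
  have hpolar (q : ℝ × ℝ) : c + Complex.polarCoord.symm q = circleMap c q.1 q.2 := by
    simp [circleMap, ← exp_mul_I]
  have hcont : ContinuousOn (fun q : ℝ × ℝ ↦ G (circleMap c q.1 q.2)) T :=
    hG.comp (by unfold circleMap; fun_prop) fun q hq ↦ (hmemA (ha.trans_lt hq.1.1)).2 hq.1
  calc ∫⁻ z in A, G z = ∫⁻ z, A.indicator G (c + z) := by
        rw [← lintegral_indicator hA, lintegral_add_left_eq_self]
    _ = ∫⁻ q in Complex.polarCoord.target,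
          ENNReal.ofReal q.1 • A.indicator G (c + Complex.polarCoord.symm q) :=
        (Complex.lintegral_comp_polarCoord_symm _).symm
    _ = ∫⁻ q in Complex.polarCoord.target,
          T.indicator (fun q ↦ ENNReal.ofReal q.1 * G (circleMap c q.1 q.2)) q := by
        refine setLIntegral_congr_fun Complex.polarCoord.open_target.measurableSet ?_
        rintro ⟨r, θ⟩ ⟨hr, hθ⟩
        by_cases hrab : r ∈ Ioo a b
        · simp only [hpolar]
          rw [indicator_of_mem ((hmemA hr).2 hrab), indicator_of_mem (mk_mem_prod hrab hθ),
            smul_eq_mul]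
        · simp only [hpolar]
          rw [indicator_of_notMem (mt (hmemA hr).1 hrab), indicator_of_notMem fun h ↦ hrab h.1,
            smul_zero]
    _ = ∫⁻ q in T, ENNReal.ofReal q.1 * G (circleMap c q.1 q.2) := by
        rw [setLIntegral_indicator hT, inter_eq_left.2]
        exact prod_mono (fun r hr ↦ ha.trans_lt hr.1) subset_rfl
    _ = ∫⁻ r in Ioo a b, ∫⁻ θ in Ioo (-π) π, ENNReal.ofReal r * G (circleMap c r θ) := by
        rw [Measure.volume_eq_prod]
        exact setLIntegral_prod _
          (measurable_fst.ennreal_ofReal.aemeasurable.mul (hcont.aemeasurable hT))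
    _ = _ := lintegral_congr fun r ↦ lintegral_const_mul' _ _ ENNReal.ofReal_ne_top

theorem setLIntegral_le_of_forall_measure_mul_le {α : Type*} [MeasurableSpace α]
    {μ : Measure α} {s : Set α} {F : α → ℝ≥0∞} {I : ℝ≥0∞} (hs : MeasurableSet s)
    (hμs : μ s ≠ ∞) (h : ∀ x ∈ s, μ s * F x ≤ I) : ∫⁻ x in s, F x ∂μ ≤ I := by
  rcases eq_or_ne (μ s) 0 with h0 | h0
  · simp [Measure.restrict_eq_zero.2 h0]
  calc ∫⁻ x in s, F x ∂μ ≤ ∫⁻ _ in s, I / μ s ∂μ := setLIntegral_mono' hs fun x hx ↦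
        (ENNReal.le_div_iff_mul_le (.inl h0) (.inl hμs)).2 (mul_comm (F x) _ ▸ h x hx)
    _ = I := by rw [setLIntegral_const, ENNReal.div_mul_cancel h0 hμs]

theorem volume_ball_quarter_le_volume_annulus (w : ℂ) :
    volume (ball (0 : ℂ) (1 / 4)) ≤ volume (ball w (3 / 4) \ closedBall w (1 / 2)) := by
  refine le_trans ?_ le_measure_sdiff
  rw [Complex.volume_ball, Complex.volume_ball, Complex.volume_closedBall]
  refine ENNReal.le_sub_of_add_le_right (by finiteness) ?_
  rw [← add_mul]
  gcongr
  rw [← ENNReal.ofReal_pow (by norm_num), ← ENNReal.ofReal_pow (by norm_num),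
    ← ENNReal.ofReal_pow (by norm_num), ← ENNReal.ofReal_add (by positivity) (by positivity)]
  exact ENNReal.ofReal_le_ofReal (by norm_num)

theorem ball_sdiff_closedBall_subset_of_norm_lt {w : ℂ} (hw : ‖w‖ < 1 / 4) :
    ball w (3 / 4) \ closedBall w (1 / 2) ⊆ ball 0 1 \ ball 0 (1 / 4) := by
  rintro z ⟨hz₁, hz₂⟩
  simp only [mem_ball, mem_closedBall, dist_eq_norm, not_le] at hz₁ hz₂
  simp only [mem_sdiff, mem_ball, dist_zero_right, not_lt]
  constructor
  · linarith [norm_le_norm_add_norm_sub' z w, norm_sub_rev z w]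
  · linarith [norm_sub_le z w]

section Subharmonic

variable {E : Type*} [NormedAddCommGroup E] [NormedSpace ℂ E] {f : ℂ → E} {c : ℂ} {p : ℝ}

theorem DiffContOnCl.continuousOn_sphere {R : ℝ} (hf : DiffContOnCl ℂ f (ball c |R|)) :
    ContinuousOn f (sphere c |R|) := by
  rcases eq_or_ne R 0 with rfl | hR
  · simp [continuousOn_singleton]
  · exact hf.continuousOn.mono (closure_ball c (abs_ne_zero.2 hR) ▸ sphere_subset_closedBall)

variable [CompleteSpace E]

theorem DiffContOnCl.norm_rpow_le_circleAverage {R : ℝ} (hp : 1 ≤ p)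
    (hf : DiffContOnCl ℂ f (ball c |R|)) :
    ‖f c‖ ^ p ≤ Real.circleAverage (fun z ↦ ‖f z‖ ^ p) c R := by
  have hint : CircleIntegrable f c R := hf.continuousOn_sphere.circleIntegrable'
  have hint' : CircleIntegrable (fun z ↦ ‖f z‖ ^ p) c R :=
    (hf.continuousOn_sphere.norm.rpow_const fun _ _ ↦ Or.inr (by linarith)).circleIntegrable'
  have h2π : (0 : ℝ) < 2 * π := by positivity
  rw [← hf.circleAverage, circleAverage_eq_intervalAverage, circleAverage_eq_intervalAverage]
  exact (convexOn_norm_rpow hp).map_set_average_le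
    (continuous_norm.rpow_const fun _ ↦ Or.inr (by linarith)).continuousOn isClosed_univ
    (by simp [uIoc_of_le h2π.le, pi_pos]) (uIoc_of_le h2π.le ▸ measure_Ioc_lt_top.ne)
    (by simp) hint.def' hint'.def'

theorem DiffContOnCl.ofReal_two_pi_mul_le_lintegral_circleMap {R : ℝ} (hp : 1 ≤ p)
    (hf : DiffContOnCl ℂ f (ball c |R|)) :
    ENNReal.ofReal (2 * π) * ENNReal.ofReal (‖f c‖ ^ p) ≤
      ∫⁻ θ in Ioo (-π) π, ENNReal.ofReal (‖f (circleMap c R θ)‖ ^ p) := by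
  set g : ℝ → ℝ := fun θ ↦ ‖f (circleMap c R θ)‖ ^ p
  have hmean : 2 * π * ‖f c‖ ^ p ≤ ∫ θ in (-π)..π, g θ := by
    have h := hf.norm_rpow_le_circleAverage hp
    rwa [circleAverage_eq_integral_add (-π), intervalIntegral.integral_comp_add_right
      (fun θ ↦ ‖f (circleMap c R θ)‖ ^ p), smul_eq_mul, zero_add,
      show 2 * π + -π = π by ring, le_inv_mul_iff₀ (by positivity)] at h
  have hint : IntegrableOn g (Ioc (-π) π) :=
    ((hf.continuousOn_sphere.norm.rpow_const fun _ _ ↦ Or.inr (by linarith)).comp_continuous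
      (continuous_circleMap c R) (circleMap_mem_sphere' c R)).integrableOn_Ioc
  calc ENNReal.ofReal (2 * π) * ENNReal.ofReal (‖f c‖ ^ p)
      = ENNReal.ofReal (2 * π * ‖f c‖ ^ p) := (ENNReal.ofReal_mul (by positivity)).symm
    _ ≤ ENNReal.ofReal (∫ θ in Ioc (-π) π, g θ) := by
      rw [← intervalIntegral.integral_of_le (by linarith [pi_pos])]
      exact ENNReal.ofReal_le_ofReal hmean
    _ = ∫⁻ θ in Ioc (-π) π, ENNReal.ofReal (g θ) :=
      ofReal_integral_eq_lintegral_ofReal hint (ae_of_all _ fun _ ↦ by positivity)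
    _ = ∫⁻ θ in Ioo (-π) π, ENNReal.ofReal (g θ) := setLIntegral_congr Ioo_ae_eq_Ioc.symm

theorem DifferentiableOn.volume_annulus_mul_le_setLIntegral {a b : ℝ} (hp : 1 ≤ p) (ha : 0 ≤ a)
    (hf : DifferentiableOn ℂ f (ball c b)) :
    volume (ball c b \ closedBall c a) * ENNReal.ofReal (‖f c‖ ^ p) ≤
      ∫⁻ z in ball c b \ closedBall c a, ENNReal.ofReal (‖f z‖ ^ p) := by
  have hcont : ContinuousOn (fun z ↦ ENNReal.ofReal (‖f z‖ ^ p)) (ball c b \ closedBall c a) :=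
    ENNReal.continuous_ofReal.comp_continuousOn
      ((hf.continuousOn.mono sdiff_subset).norm.rpow_const fun _ _ ↦ Or.inr (by linarith))
  rw [← setLIntegral_one, setLIntegral_annulus_eq ha continuousOn_const,
    setLIntegral_annulus_eq ha hcont, ← lintegral_mul_const' _ _ ENNReal.ofReal_ne_top]
  refine setLIntegral_mono' measurableSet_Ioo fun r hr ↦ ?_
  have hfr : DiffContOnCl ℂ f (ball c |r|) := by
    rw [abs_of_pos (ha.trans_lt hr.1)]
    exact hf.diffContOnCl_ball (closedBall_subset_ball hr.2)
  rw [mul_assoc, setLIntegral_one, Real.volume_Ioo, sub_neg_eq_add, ← two_mul]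
  gcongr
  exact hfr.ofReal_two_pi_mul_le_lintegral_circleMap hp

theorem DifferentiableOn.setLIntegral_ball_quarter_le (hp : 1 ≤ p)
    (hf : DifferentiableOn ℂ f (ball 0 1)) :
    ∫⁻ z in ball 0 (1 / 4), ENNReal.ofReal (‖f z‖ ^ p) ≤
      ∫⁻ z in ball 0 1 \ ball 0 (1 / 4), ENNReal.ofReal (‖f z‖ ^ p) := by
  refine setLIntegral_le_of_forall_measure_mul_le measurableSet_ball measure_ball_lt_top.ne
    fun w hw ↦ ?_
  rw [mem_ball_zero_iff] at hw
  have hball : ball w (3 / 4) ⊆ ball 0 1 :=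
    ball_subset_ball' (by rw [dist_zero_right]; linarith)
  calc volume (ball (0 : ℂ) (1 / 4)) * ENNReal.ofReal (‖f w‖ ^ p)
      ≤ volume (ball w (3 / 4) \ closedBall w (1 / 2)) * ENNReal.ofReal (‖f w‖ ^ p) := by
        gcongr ?_ * _
        exact volume_ball_quarter_le_volume_annulus w
    _ ≤ ∫⁻ z in ball w (3 / 4) \ closedBall w (1 / 2), ENNReal.ofReal (‖f z‖ ^ p) :=
        (hf.mono hball).volume_annulus_mul_le_setLIntegral hp (by norm_num)
    _ ≤ _ := lintegral_mono_set (ball_sdiff_closedBall_subset_of_norm_lt hw)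

end Subharmonic

theorem statement_18 (p : ℝ) (hp : 1 ≤ p) :
    ∃ c : ℝ, 0 < c ∧ ∀ f : ℂ → ℂ, DifferentiableOn ℂ f (Metric.ball (0 : ℂ) 1) →
      ENNReal.ofReal c * ∫⁻ z in Metric.ball (0 : ℂ) 1, ENNReal.ofReal (‖f z‖ ^ p) ∂volume ≤
        ∫⁻ z in Metric.ball (0 : ℂ) 1, ENNReal.ofReal (‖z * f z‖ ^ p) ∂volume := by
  refine ⟨(1 / 4) ^ p / 2, by positivity, fun f hf ↦ ?_⟩
  set F : ℂ → ℝ≥0∞ := fun z ↦ ENNReal.ofReal (‖f z‖ ^ p)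
  set outer := ball (0 : ℂ) 1 \ ball 0 (1 / 4)
  have hdisc : ∫⁻ z in ball 0 1, F z ≤ 2 * ∫⁻ z in outer, F z :=
    calc ∫⁻ z in ball 0 1, F z = ∫⁻ z in ball 0 (1 / 4) ∪ outer, F z := by
          rw [show ball 0 (1 / 4) ∪ outer = ball 0 1 from
            union_sdiff_cancel (ball_subset_ball (by norm_num))]
      _ ≤ (∫⁻ z in ball 0 (1 / 4), F z) + ∫⁻ z in outer, F z := lintegral_union_le F _ _
      _ ≤ 2 * ∫⁻ z in outer, F z := by
          rw [two_mul]
          gcongr ?_ + _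
          exact hf.setLIntegral_ball_quarter_le hp
  have houter (z : ℂ) (hz : z ∈ outer) :
      ENNReal.ofReal ((1 / 4) ^ p) * F z ≤ ENNReal.ofReal (‖z * f z‖ ^ p) := by
    have hz : 1 / 4 ≤ ‖z‖ := by simpa using hz.2
    rw [← ENNReal.ofReal_mul (by positivity), norm_mul, mul_rpow (norm_nonneg _) (norm_nonneg _)]
    gcongr
  calc ENNReal.ofReal ((1 / 4) ^ p / 2) * ∫⁻ z in ball 0 1, F z
      ≤ ENNReal.ofReal ((1 / 4) ^ p / 2) * (2 * ∫⁻ z in outer, F z) := by gcongr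
    _ = ENNReal.ofReal ((1 / 4) ^ p) * ∫⁻ z in outer, F z := by
        rw [← mul_assoc, ← ENNReal.ofReal_ofNat 2, ← ENNReal.ofReal_mul (by positivity),
          div_mul_cancel₀ _ two_ne_zero]
    _ ≤ ∫⁻ z in outer, ENNReal.ofReal ((1 / 4) ^ p) * F z := lintegral_const_mul_le _ _
    _ ≤ ∫⁻ z in outer, ENNReal.ofReal (‖z * f z‖ ^ p) :=
        setLIntegral_mono' (measurableSet_ball.diff measurableSet_ball) houter
    _ ≤ ∫⁻ z in ball 0 1, ENNReal.ofReal (‖z * f z‖ ^ p) := lintegral_mono_set sdiff_subset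
end

section
/- Let p ∈ [1, ∞), let n ≥ 1 be an integer, and let ε ∈ (0, 1). Then there exists a constant c > 0 such that for every m ∈ ℕ, ∫₀^{2π} ∫₀¹ (1 + 2r·cos θ + r²)^{mp/2} · r · (1 − r²)ⁿ dr dθ ≥ c · (4 − ε)^{mp/2} / (mp + n)^{n+1}. -/
open MeasureTheory Real

set_option maxHeartbeats 1000000 in

theorem statement_19 (p : ℝ) (hp : 1 ≤ p) (n : ℕ) (hn : 1 ≤ n)
    (ε : ℝ) (hε0 : 0 < ε) (hε1 : ε < 1) :
    ∃ c : ℝ, 0 < c ∧ ∀ m : ℕ,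
      c * (4 - ε) ^ ((m * p) / 2) / ((m * p + n) ^ (n + 1)) ≤
        ∫ θ in (0 : ℝ)..(2 * Real.pi), ∫ r in (0 : ℝ)..1,
          (1 + 2 * r * Real.cos θ + r ^ 2) ^ ((m * p) / 2) * r * (1 - r ^ 2) ^ n := by
  set T : ℝ := Real.sqrt (ε / 8) with hT
  set s : ℝ := 1 - ε / 16 with hs
  have hT0 : 0 < T := Real.sqrt_pos.2 (by linarith)
  have hT1 : T ≤ 1 := by
    rw [hT, show (1:ℝ) = Real.sqrt 1 from (Real.sqrt_one).symm]
    exact Real.sqrt_le_sqrt (by linarith)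
  have hTsq : T ^ 2 = ε / 8 := Real.sq_sqrt (by linarith)
  have hs0 : (0:ℝ) < s := by rw [hs]; linarith
  have hs1 : s < 1 := by rw [hs]; linarith
  set K : ℝ := ∫ r in s..1, r * (1 - r ^ 2) ^ n with hK
  have hKpos : 0 < K := by
    apply intervalIntegral.intervalIntegral_pos_of_pos_on
    · exact (continuous_id.mul ((continuous_const.sub (continuous_pow 2)).pow n)).intervalIntegrable _ _
    · intro x hx
      have hx0 : 0 < x := lt_trans hs0 hx.1
      have hx1 : x < 1 := hx.2
      have : 0 < 1 - x ^ 2 := by nlinarith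
      positivity
    · exact hs1
  refine ⟨T * K, mul_pos hT0 hKpos, fun m => ?_⟩
  set a : ℝ := (m * p) / 2 with hA
  have ha : 0 ≤ a := by
    have : (0:ℝ) ≤ (m:ℝ) := Nat.cast_nonneg m
    have : (0:ℝ) ≤ (m:ℝ) * p := by nlinarith
    rw [hA]; linarith
  -- base nonnegativity
  have hbase : ∀ θ r : ℝ, 0 ≤ 1 + 2 * r * Real.cos θ + r ^ 2 := by
    intro θ r
    nlinarith [sq_nonneg (1 + r * Real.cos θ), sq_nonneg (r * Real.sin θ),
      Real.sin_sq_add_cos_sq θ]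
  -- joint continuity
  have hcont : Continuous (Function.uncurry fun (θ r : ℝ) =>
      (1 + 2 * r * Real.cos θ + r ^ 2) ^ a * r * (1 - r ^ 2) ^ n) := by
    have hb : Continuous fun q : ℝ × ℝ => 1 + 2 * q.2 * Real.cos q.1 + q.2 ^ 2 := by
      fun_prop
    have h1 : Continuous fun q : ℝ × ℝ => (1 + 2 * q.2 * Real.cos q.1 + q.2 ^ 2) ^ a :=
      hb.rpow_const (fun q => Or.inr ha)
    exact (h1.mul continuous_snd).mul (by fun_prop)
  have hcontθ : ∀ θ : ℝ, Continuous fun r : ℝ =>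
      (1 + 2 * r * Real.cos θ + r ^ 2) ^ a * r * (1 - r ^ 2) ^ n := by
    intro θ
    exact hcont.comp (continuous_const.prodMk continuous_id)
  -- nonnegativity of the integrand for r ∈ [0,1]
  have hnonneg : ∀ θ r : ℝ, 0 ≤ r → r ≤ 1 →
      0 ≤ (1 + 2 * r * Real.cos θ + r ^ 2) ^ a * r * (1 - r ^ 2) ^ n := by
    intro θ r hr0 hr1
    have h1 : 0 ≤ (1 + 2 * r * Real.cos θ + r ^ 2) ^ a := Real.rpow_nonneg (hbase θ r) a
    have h2 : (0:ℝ) ≤ 1 - r ^ 2 := by nlinarith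
    positivity
  set g : ℝ → ℝ := fun θ => ∫ r in (0:ℝ)..1,
      (1 + 2 * r * Real.cos θ + r ^ 2) ^ a * r * (1 - r ^ 2) ^ n with hg
  have hgcont : Continuous g :=
    intervalIntegral.continuous_parametric_intervalIntegral_of_continuous' hcont 0 1
  have hgnonneg : ∀ θ : ℝ, 0 ≤ g θ := by
    intro θ
    apply intervalIntegral.integral_nonneg (by norm_num)
    intro r hr
    exact hnonneg θ r hr.1 hr.2
  -- key region bound
  have hregion : ∀ θ ∈ Set.Icc (0:ℝ) T, ∀ r ∈ Set.Icc s 1,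
      4 - ε ≤ 1 + 2 * r * Real.cos θ + r ^ 2 := by
    intro θ hθ r hr
    have hcos : 1 - ε / 16 ≤ Real.cos θ := by
      have h1 : 1 - θ ^ 2 / 2 ≤ Real.cos θ := Real.one_sub_sq_div_two_le_cos
      have h2 : θ ^ 2 ≤ T ^ 2 := by nlinarith [hθ.1, hθ.2]
      rw [hTsq] at h2; linarith
    have hrs : s ≤ r := hr.1
    have hr1 : r ≤ 1 := hr.2
    have hcos1 : Real.cos θ ≤ 1 := Real.cos_le_one θ
    rw [hs] at hrs
    nlinarith [sq_nonneg (r - 1), sq_nonneg (ε/16)]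
  -- inner integral lower bound for θ ∈ [0, T]
  have hinner : ∀ θ ∈ Set.Icc (0:ℝ) T, (4 - ε) ^ a * K ≤ g θ := by
    intro θ hθ
    have hint1 : IntervalIntegrable (fun r : ℝ =>
        (1 + 2 * r * Real.cos θ + r ^ 2) ^ a * r * (1 - r ^ 2) ^ n) volume 0 s :=
      ((hcontθ θ).intervalIntegrable _ _)
    have hint2 : IntervalIntegrable (fun r : ℝ =>
        (1 + 2 * r * Real.cos θ + r ^ 2) ^ a * r * (1 - r ^ 2) ^ n) volume s 1 :=
      ((hcontθ θ).intervalIntegrable _ _)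
    have hsplit : g θ = (∫ r in (0:ℝ)..s,
        (1 + 2 * r * Real.cos θ + r ^ 2) ^ a * r * (1 - r ^ 2) ^ n) +
        ∫ r in s..(1:ℝ), (1 + 2 * r * Real.cos θ + r ^ 2) ^ a * r * (1 - r ^ 2) ^ n :=
      (intervalIntegral.integral_add_adjacent_intervals hint1 hint2).symm
    have h0s : 0 ≤ ∫ r in (0:ℝ)..s,
        (1 + 2 * r * Real.cos θ + r ^ 2) ^ a * r * (1 - r ^ 2) ^ n := by
      apply intervalIntegral.integral_nonneg hs0.le
      intro r hr
      exact hnonneg θ r hr.1 (le_trans hr.2 hs1.le)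
    have hmono : (∫ r in s..(1:ℝ), (4 - ε) ^ a * (r * (1 - r ^ 2) ^ n)) ≤
        ∫ r in s..(1:ℝ), (1 + 2 * r * Real.cos θ + r ^ 2) ^ a * r * (1 - r ^ 2) ^ n := by
      apply intervalIntegral.integral_mono_on hs1.le
      · exact (by fun_prop : Continuous fun r : ℝ =>
          (4 - ε) ^ a * (r * (1 - r ^ 2) ^ n)).intervalIntegrable _ _
      · exact hint2
      · intro r hr
        have hr0 : 0 ≤ r := le_trans hs0.le hr.1
        have hr1 : r ≤ 1 := hr.2
        have hrw : (0:ℝ) ≤ r * (1 - r ^ 2) ^ n := by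
          have : (0:ℝ) ≤ 1 - r ^ 2 := by nlinarith
          positivity
        have hb : (4 - ε) ^ a ≤ (1 + 2 * r * Real.cos θ + r ^ 2) ^ a :=
          Real.rpow_le_rpow (by linarith) (hregion θ hθ r hr) ha
        calc (4 - ε) ^ a * (r * (1 - r ^ 2) ^ n)
            ≤ (1 + 2 * r * Real.cos θ + r ^ 2) ^ a * (r * (1 - r ^ 2) ^ n) :=
              mul_le_mul_of_nonneg_right hb hrw
          _ = (1 + 2 * r * Real.cos θ + r ^ 2) ^ a * r * (1 - r ^ 2) ^ n := by ring
    have hconst : (∫ r in s..(1:ℝ), (4 - ε) ^ a * (r * (1 - r ^ 2) ^ n)) =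
        (4 - ε) ^ a * K := by
      rw [hK, intervalIntegral.integral_const_mul]
    rw [hsplit]
    rw [hconst] at hmono
    linarith
  -- outer integral
  have hT2π : T ≤ 2 * Real.pi := le_trans hT1 (by nlinarith [Real.pi_gt_three])
  have hout : T * ((4 - ε) ^ a * K) ≤ ∫ θ in (0:ℝ)..(2 * Real.pi), g θ := by
    have hsplit : (∫ θ in (0:ℝ)..(2 * Real.pi), g θ) =
        (∫ θ in (0:ℝ)..T, g θ) + ∫ θ in T..(2 * Real.pi), g θ :=
      (intervalIntegral.integral_add_adjacent_intervals
        (hgcont.intervalIntegrable _ _) (hgcont.intervalIntegrable _ _)).symm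
    have h2 : 0 ≤ ∫ θ in T..(2 * Real.pi), g θ :=
      intervalIntegral.integral_nonneg hT2π (fun θ _ => hgnonneg θ)
    have h1 : T * ((4 - ε) ^ a * K) ≤ ∫ θ in (0:ℝ)..T, g θ := by
      have := intervalIntegral.integral_mono_on hT0.le
        ((continuous_const).intervalIntegrable (μ := volume) 0 T)
        (hgcont.intervalIntegrable 0 T) (fun θ hθ => hinner θ hθ)
      rw [intervalIntegral.integral_const, smul_eq_mul, sub_zero] at this
      linarith
    rw [hsplit]; linarith
  -- conclude
  have hden : (1:ℝ) ≤ (↑m * p + ↑n) ^ (n + 1) := by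
    apply one_le_pow₀
    have h1 : (0:ℝ) ≤ (m:ℝ) * p := mul_nonneg (Nat.cast_nonneg m) (by linarith)
    have h2 : (1:ℝ) ≤ (n:ℝ) := by exact_mod_cast hn
    linarith
  have hnum : 0 ≤ T * K * (4 - ε) ^ a :=
    mul_nonneg (mul_nonneg hT0.le hKpos.le) (Real.rpow_nonneg (by linarith) a)
  calc T * K * (4 - ε) ^ ((m:ℝ) * p / 2) / ((↑m * p + ↑n) ^ (n + 1))
      ≤ T * K * (4 - ε) ^ ((m:ℝ) * p / 2) := div_le_self hnum hden
    _ = T * ((4 - ε) ^ a * K) := by rw [hA]; ring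
    _ ≤ _ := hout
end
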